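/- arXiv:1303.3101 — 9 statements merged into one kernel-verified Lean document; each statement's English description precedes it below -/
import Mathlib

section
/- For every integer k ≥ 3 and every ε > 0, there exists N such that for every n ≥ N and every digraph D on n vertices, the number of k-element vertex subsets of D that induce a copy of the directed star S⃗_k is at most (α_k + ε)·C(n,k), where α_k = sup_{x ∈ [0,1)} k·x·(1−x)^{k−1}/(1−x^k). -/
/-- The number of `k`-element vertex subsets of the digraph `D` (given by its arc
relation) that induce a copy of the directed star `S⃗ₖ`: there is a center `v ∈ S`
such that `D` has an arc `u → w` (for `u, w ∈ S`) iff `u = v` and `w ≠ v`. -/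
noncomputable def starCount (k : ℕ) {V : Type} [Fintype V] (D : V → V → Prop) : ℕ :=
  {S : Finset V | S.card = k ∧
    ∃ v ∈ S, ∀ u ∈ S, ∀ w ∈ S, (D u w ↔ (u = v ∧ w ≠ v))}.ncard

/-- `α_k = sup_{x ∈ [0,1)} k·x·(1−x)^{k−1}/(1−x^k)`. -/
noncomputable def alphaStar (k : ℕ) : ℝ :=
  sSup ((fun x : ℝ => (k : ℝ) * x * (1 - x) ^ (k - 1) / (1 - x ^ k)) '' Set.Ico 0 1)

/-!
Star densities are bounded by Zykov symmetrisation. Maximise the number of (loop-agnostic) stars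
inside a vertex set `A` over all digraphs. If `u, w` are non-adjacent, making `w` a twin of `u`
and making `u` a twin of `w` together at least double the count, so in a maximiser either
move keeps it maximal. Take `t` with the largest closed non-neighbourhood `Y` and make all of
`Y` twins of `t`. A star not inside `A \ Y` then either has its centre among the in-neighbours
of `t` and its leaves in `Y`, or its centre in `Y` and an independent set of out-neighbours of `t`
as leaves; the latter are double counted using that no closed non-neighbourhood exceeds `|Y|`.
With `m = |A|`, `y = |Y|` this gives `k! s(m) ≤ α (m - y)^k + k (m - y) y^(k-1) ≤ α m^k`, the
last step being the definition of `α_k` at `x = (m - y) / m`. Finally `n^k / k! ~ C(n, k)`.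
-/

open Finset Filter Asymptotics
open scoped Nat

namespace StarInducibility

open scoped Classical

variable {V : Type*}

/-- Loopless pullback: `a` plays the role of `f a`. -/
def pullback (f : V → V) (D : V → V → Prop) : V → V → Prop :=
  fun a b => f a ≠ f b ∧ D (f a) (f b)

theorem pullback_pullback (f g : V → V) (D : V → V → Prop) :
    pullback g (pullback f D) = pullback (f ∘ g) D := by
  funext a b
  simp only [pullback, Function.comp_apply, eq_iff_iff]
  exact ⟨And.right, fun h => ⟨fun hab => h.1 (congrArg f hab), h⟩⟩

/-- Unlike in `starCount`, loops are ignored. -/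
def IsStarAt (D : V → V → Prop) (S : Finset V) (v : V) : Prop :=
  v ∈ S ∧ ∀ a ∈ S, ∀ b ∈ S, a ≠ b → (D a b ↔ a = v)

theorem IsStarAt.pullback {D : V → V → Prop} {f : V → V} {S T : Finset V} {c : V}
    (hT : IsStarAt D T (f c)) (hc : c ∈ S) (hST : ∀ a ∈ S, f a ∈ T)
    (hfc : ∀ a ∈ S, f a = f c → a = c) : IsStarAt (pullback f D) S c := by
  refine ⟨hc, fun a ha b hb hab => ?_⟩
  by_cases hf : f a = f b
  · simp only [StarInducibility.pullback, hf, ne_eq, not_true_eq_false, false_and, false_iff]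
    rintro rfl
    exact hab (hfc b hb hf.symm).symm
  · rw [StarInducibility.pullback, and_iff_right hf, hT.2 _ (hST a ha) _ (hST b hb) hf]
    exact ⟨hfc a ha, fun h => h ▸ rfl⟩

noncomputable def stars (k : ℕ) (D : V → V → Prop) (A : Finset V) : Finset (Finset V) :=
  (A.powersetCard k).filter fun S => ∃ v, IsStarAt D S v

theorem mem_stars {k : ℕ} {D : V → V → Prop} {A S : Finset V} :
    S ∈ stars k D A ↔ S ⊆ A ∧ #S = k ∧ ∃ v, IsStarAt D S v := by
  simp [stars, mem_powersetCard, and_assoc]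

theorem starCount_le_card_stars {V : Type} [Fintype V] (k : ℕ) (D : V → V → Prop) :
    starCount k D ≤ #(stars k D univ) := by
  rw [starCount, ← Set.ncard_coe_finset]
  refine Set.ncard_le_ncard (fun S ⟨hSk, v, hv, hD⟩ => ?_) (finite_toSet _)
  refine mem_stars.2 ⟨subset_univ S, hSk, v, hv, fun a ha b hb hab => ?_⟩
  exact (hD a ha b hb).trans
    ⟨And.left, fun hav => ⟨hav, fun hbv => hab (hav.trans hbv.symm)⟩⟩

def NonAdj (D : V → V → Prop) (a b : V) : Prop := ¬D a b ∧ ¬D b a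

theorem NonAdj.symm {D : V → V → Prop} {a b : V} (h : NonAdj D a b) : NonAdj D b a :=
  And.symm h

noncomputable def closedNonNeighbors (D : V → V → Prop) (A : Finset V) (a : V) : Finset V :=
  A.filter fun b => b = a ∨ NonAdj D a b

/-- Every vertex of `Y` becomes a non-adjacent twin of `t`. -/
def cloneOnto (t : V) (Y : Finset V) (D : V → V → Prop) : V → V → Prop :=
  pullback (fun a => if a ∈ Y then t else a) D

theorem cloneOnto_apply_of_notMem {t a b : V} {Y : Finset V} {D : V → V → Prop}
    (ha : a ∉ Y) (hb : b ∉ Y) : cloneOnto t Y D a b ↔ a ≠ b ∧ D a b := by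
  simp [cloneOnto, pullback, ha, hb]

theorem cloneOnto_insert (t y : V) (Y : Finset V) (D : V → V → Prop) :
    cloneOnto t (insert y Y) D = cloneOnto t {y} (cloneOnto t Y D) := by
  rw [cloneOnto, cloneOnto, cloneOnto, pullback_pullback]
  congr 1
  funext a
  by_cases hay : a = y <;> simp [hay]

theorem cloneOnto_insert_self (t : V) (Y : Finset V) (D : V → V → Prop) :
    cloneOnto t (insert t Y) D = cloneOnto t Y D := by
  rw [cloneOnto, cloneOnto]
  congr 1
  funext a
  by_cases hat : a = t <;> simp [hat]

theorem IsStarAt.cloneOnto_of_disjoint {D : V → V → Prop} {S Y : Finset V} {t v : V}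
    (hS : IsStarAt D S v) (hSY : Disjoint S Y) : IsStarAt (cloneOnto t Y D) S v := by
  have hf : ∀ a ∈ S, (if a ∈ Y then t else a) = a := fun a ha =>
    if_neg (disjoint_left.1 hSY ha)
  refine IsStarAt.pullback ?_ hS.1 (fun a ha => (hf a ha).symm ▸ ha) fun a ha h => ?_
  · rwa [hf v hS.1]
  · rwa [hf a ha, hf v hS.1] at h

theorem IsStarAt.cloneOnto_map_swap {D : V → V → Prop} {S : Finset V} {u w v : V}
    (hS : IsStarAt D S v) (huS : u ∈ S) (hne : u ≠ w) (huw : NonAdj D u w) :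
    IsStarAt (cloneOnto u {w} D) (S.map (Equiv.swap u w).toEmbedding) (Equiv.swap u w v) := by
  set f : V → V := fun a => if a ∈ ({w} : Finset V) then u else a
  have hf_swap : ∀ a, f (Equiv.swap u w a) = f a := by
    intro a
    simp only [f, mem_singleton, Equiv.swap_apply_def]
    split_ifs <;> simp_all
  have hf_mem : ∀ a ∈ S, f a ∈ S := by
    intro a ha
    simp only [f, mem_singleton]
    split_ifs
    exacts [huS, ha]
  have hfv : f v = v := by
    refine if_neg fun hvw => huw.2 ?_
    rw [mem_singleton] at hvw
    exact hvw ▸ (hS.2 _ hS.1 _ huS (hvw ▸ hne.symm)).2 rfl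
  have hT : IsStarAt D S (f (Equiv.swap u w v)) := by rwa [hf_swap, hfv]
  refine hT.pullback (mem_map_of_mem _ hS.1) ?_ ?_
  · simp only [forall_mem_map, Equiv.coe_toEmbedding, hf_swap]
    exact hf_mem
  · simp only [forall_mem_map, Equiv.coe_toEmbedding, hf_swap, hfv, EmbeddingLike.apply_eq_iff_eq]
    intro a ha hav
    by_cases haw : a = w
    · simp only [f, haw, mem_singleton, if_true] at hav
      exact absurd ((hS.2 _ (hav ▸ hS.1) _ (haw ▸ ha) hne).2 hav) huw.1
    · simpa [f, haw] using hav

section Clone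

variable {k : ℕ} {D : V → V → Prop} {A : Finset V} {u w : V}

theorem card_filter_add_card_filter_le_card_stars_cloneOnto (hu : u ∈ A) (hw : w ∈ A)
    (hne : u ≠ w) (huw : NonAdj D u w) :
    #((stars k D A).filter (w ∉ ·)) + #((stars k D A).filter (u ∈ ·)) ≤
      #(stars k (cloneOnto u {w} D) A) := by
  set σ := (Equiv.swap u w).toEmbedding
  have h_avoid :
      (stars k D A).filter (w ∉ ·) ⊆ (stars k (cloneOnto u {w} D) A).filter (w ∉ ·) := by
    simp only [subset_iff, mem_filter, mem_stars]
    rintro S ⟨⟨hSA, hSk, v, hv⟩, hwS⟩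
    exact ⟨⟨hSA, hSk, v, hv.cloneOnto_of_disjoint (disjoint_singleton_right.2 hwS)⟩, hwS⟩
  have h_swap : ((stars k D A).filter (u ∈ ·)).image (·.map σ) ⊆
      (stars k (cloneOnto u {w} D) A).filter (w ∈ ·) := by
    simp only [subset_iff, mem_image, mem_filter, mem_stars]
    rintro _ ⟨S, ⟨⟨hSA, hSk, v, hv⟩, huS⟩, rfl⟩
    refine ⟨⟨?_, by rw [card_map, hSk], _, hv.cloneOnto_map_swap huS hne huw⟩, ?_⟩
    · simp only [forall_mem_map, σ, Equiv.coe_toEmbedding, Equiv.swap_apply_def]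
      intro a ha
      split_ifs
      exacts [hw, hu, hSA ha]
    · exact mem_map.2 ⟨u, huS, Equiv.swap_apply_left u w⟩
  calc #((stars k D A).filter (w ∉ ·)) + #((stars k D A).filter (u ∈ ·))
      = #((stars k D A).filter (w ∉ ·)) +
          #(((stars k D A).filter (u ∈ ·)).image (·.map σ)) := by
        rw [card_image_of_injective _ (map_injective σ)]
    _ ≤ #((stars k (cloneOnto u {w} D) A).filter (w ∉ ·)) +
          #((stars k (cloneOnto u {w} D) A).filter (w ∈ ·)) :=
        add_le_add (card_le_card h_avoid) (card_le_card h_swap)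
    _ = #(stars k (cloneOnto u {w} D) A) := by
        rw [add_comm, card_filter_add_card_filter_not]

theorem two_mul_card_stars_le (hu : u ∈ A) (hw : w ∈ A) (hne : u ≠ w) (huw : NonAdj D u w) :
    2 * #(stars k D A) ≤ #(stars k (cloneOnto u {w} D) A) + #(stars k (cloneOnto w {u} D) A) := by
  have hu_w := card_filter_add_card_filter_le_card_stars_cloneOnto (k := k) hu hw hne huw
  have hw_u := card_filter_add_card_filter_le_card_stars_cloneOnto (k := k) hw hu hne.symm huw.symm
  have hsplit_u := card_filter_add_card_filter_not (s := stars k D A) (u ∈ ·)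
  have hsplit_w := card_filter_add_card_filter_not (s := stars k D A) (w ∈ ·)
  omega

def IsStarMaximal (k : ℕ) (A : Finset V) (D : V → V → Prop) : Prop :=
  ∀ D' : V → V → Prop, #(stars k D' A) ≤ #(stars k D A)

theorem IsStarMaximal.of_card_le {D' : V → V → Prop} (hD : IsStarMaximal k A D)
    (h : #(stars k D A) ≤ #(stars k D' A)) : IsStarMaximal k A D' :=
  fun E => (hD E).trans h

theorem IsStarMaximal.cloneOnto_singleton (hD : IsStarMaximal k A D) (hu : u ∈ A) (hw : w ∈ A)
    (hne : u ≠ w) (huw : NonAdj D u w) : IsStarMaximal k A (cloneOnto u {w} D) := by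
  refine hD.of_card_le ?_
  have := two_mul_card_stars_le (k := k) hu hw hne huw
  have := hD (cloneOnto w {u} D)
  omega

theorem IsStarMaximal.cloneOnto_of_nonAdj {t : V} {Y : Finset V} (hD : IsStarMaximal k A D)
    (ht : t ∈ A) (hYA : Y ⊆ A) (hY : ∀ y ∈ Y, y ≠ t → NonAdj D t y) :
    IsStarMaximal k A (cloneOnto t Y D) := by
  induction Y using Finset.induction_on with
  | empty =>
    refine hD.of_card_le (card_le_card fun S hS => ?_)
    obtain ⟨hSA, hSk, v, hv⟩ := mem_stars.1 hS
    exact mem_stars.2 ⟨hSA, hSk, v, hv.cloneOnto_of_disjoint (disjoint_empty_right S)⟩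
  | insert y Y hyY ih =>
    have ih := ih ((subset_insert y Y).trans hYA) fun z hz => hY z (mem_insert_of_mem hz)
    rcases eq_or_ne y t with rfl | hyt
    · rwa [cloneOnto_insert_self]
    · obtain ⟨hnty, hnyt⟩ := hY y (mem_insert_self y Y) hyt
      rw [cloneOnto_insert]
      refine ih.cloneOnto_singleton ht (hYA (mem_insert_self y Y)) hyt.symm ⟨?_, ?_⟩ <;>
        simp [cloneOnto, pullback, hyY, hnty, hnyt]

end Clone

theorem mul_card_pairwise_le {R : V → V → Prop} {Z : Finset V} {m j : ℕ} (hj : j ≠ 0)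
    (hR : ∀ a ∈ Z, #(Z.filter fun b => b = a ∨ R a b) ≤ m) :
    m * #((Z.powersetCard j).filter fun L : Finset V => (L : Set V).Pairwise R) ≤
      #Z * m.choose j := by
  set I := (Z.powersetCard j).filter fun L : Finset V => (L : Set V).Pairwise R
  obtain rfl | ⟨m, rfl⟩ : m = 0 ∨ ∃ m', m = m' + 1 := by rcases m with _ | m <;> simp
  · simp
  have hdc : #I * j ≤ #Z * m.choose (j - 1) := by
    refine card_mul_le_card_mul (fun L a => a ∈ L) (fun L hL => ?_) (fun a ha => ?_)
    · obtain ⟨hLZ, hLj⟩ := mem_powersetCard.1 (mem_filter.1 hL).1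
      rw [bipartiteAbove, filter_mem_eq_inter, inter_eq_right.2 hLZ, hLj]
    set P := (Z.filter fun b => b = a ∨ R a b).erase a
    have hP : #P ≤ m := by
      have := hR a ha
      rw [card_erase_of_mem (mem_filter.2 ⟨ha, Or.inl rfl⟩)]
      omega
    calc #(I.bipartiteBelow (fun L a => a ∈ L) a) ≤ #(P.powersetCard (j - 1)) := by
          refine card_le_card_of_injOn (·.erase a) (fun L hL => ?_) fun L hL L' hL' h => ?_
          · simp only [bipartiteBelow, mem_coe, mem_filter, mem_powersetCard, I] at hL ⊢
            obtain ⟨⟨⟨hLZ, hLj⟩, hLR⟩, haL⟩ := hL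
            refine ⟨fun b hb => ?_, by rw [card_erase_of_mem haL, hLj]⟩
            obtain ⟨hba, hbL⟩ := mem_erase.1 hb
            exact mem_erase.2 ⟨hba, mem_filter.2 ⟨hLZ hbL, Or.inr (hLR haL hbL hba.symm)⟩⟩
          · simp only [bipartiteBelow, coe_filter, Set.mem_ofPred_eq] at hL hL'
            rw [← insert_erase hL.2, ← insert_erase hL'.2]
            exact congrArg (insert a) h
      _ ≤ m.choose (j - 1) := by
          rw [card_powersetCard]
          exact Nat.choose_le_choose _ hP
  have hpascal := Nat.add_one_mul_choose_eq m (j - 1)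
  rw [Nat.sub_add_cancel (Nat.one_le_iff_ne_zero.2 hj)] at hpascal
  refine Nat.le_of_mul_le_mul_right ?_ (Nat.pos_of_ne_zero hj)
  calc (m + 1) * #I * j = (m + 1) * (#I * j) := by ring
    _ ≤ (m + 1) * (#Z * m.choose (j - 1)) := by gcongr
    _ = #Z * (m + 1).choose j * j := by rw [mul_left_comm, hpascal, mul_assoc]

section Collapse

variable {k : ℕ} {D : V → V → Prop} {A Y S : Finset V} {t c : V}

theorem not_cloneOnto_of_mem {a b : V} (ha : a ∈ Y) (hb : b ∈ Y) : ¬cloneOnto t Y D a b := by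
  simp [cloneOnto, pullback, ha, hb]

theorem cloneOnto_apply_of_mem_of_notMem {a b : V} (htY : t ∈ Y) (ha : a ∈ Y) (hb : b ∉ Y) :
    cloneOnto t Y D a b ↔ D t b := by
  have hbt : t ≠ b := fun h => hb (h ▸ htY)
  simp [cloneOnto, pullback, ha, hb, hbt]

theorem cloneOnto_apply_of_notMem_of_mem {a b : V} (htY : t ∈ Y) (ha : a ∉ Y) (hb : b ∈ Y) :
    cloneOnto t Y D a b ↔ D a t := by
  have hat : a ≠ t := fun h => ha (h ▸ htY)
  simp [cloneOnto, pullback, ha, hb, hat]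

theorem IsStarAt.cloneOnto_center_notMem (hS : IsStarAt (cloneOnto t Y D) S c) (hSA : S ⊆ A)
    (htY : t ∈ Y) (hY : ∀ b ∈ A, b ∉ Y → D t b ∨ D b t) {x : V} (hxS : x ∈ S)
    (hxY : x ∈ Y) (hcY : c ∉ Y) : (D c t ∧ ¬D t c) ∧ S.erase c ⊆ Y := by
  have hxc : x ≠ c := fun h => hcY (h ▸ hxY)
  refine ⟨⟨?_, ?_⟩, fun l hl => ?_⟩
  · rw [← cloneOnto_apply_of_notMem_of_mem (D := D) htY hcY hxY, hS.2 _ hS.1 _ hxS hxc.symm]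
  · rw [← cloneOnto_apply_of_mem_of_notMem (D := D) htY hxY hcY, hS.2 _ hxS _ hS.1 hxc]
    exact hxc
  obtain ⟨hlc, hlS⟩ := mem_erase.1 hl
  by_contra hlY
  have hlx : l ≠ x := fun h => hlY (h ▸ hxY)
  rcases hY l (hSA hlS) hlY with h | h
  · rw [← cloneOnto_apply_of_mem_of_notMem (D := D) htY hxY hlY, hS.2 _ hxS _ hlS hlx.symm] at h
    exact hxc h
  · rw [← cloneOnto_apply_of_notMem_of_mem (D := D) htY hlY hxY, hS.2 _ hlS _ hxS hlx] at h
    exact hlc h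

theorem IsStarAt.cloneOnto_center_mem (hS : IsStarAt (cloneOnto t Y D) S c) (hSA : S ⊆ A)
    (htY : t ∈ Y) (hcY : c ∈ Y) :
    S.erase c ⊆ (A \ Y).filter (fun b => D t b ∧ ¬D b t) ∧
      (S.erase c : Set V).Pairwise (NonAdj D) := by
  have hleaf : ∀ l ∈ S.erase c, l ∉ Y := by
    intro l hl hlY
    obtain ⟨hlc, hlS⟩ := mem_erase.1 hl
    exact not_cloneOnto_of_mem hcY hlY ((hS.2 _ hS.1 _ hlS hlc.symm).2 rfl)
  refine ⟨fun l hl => ?_, fun a ha b hb hab => ?_⟩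
  · obtain ⟨hlc, hlS⟩ := mem_erase.1 hl
    refine mem_filter.2 ⟨mem_sdiff.2 ⟨hSA hlS, hleaf l hl⟩, ?_, ?_⟩
    · rw [← cloneOnto_apply_of_mem_of_notMem (D := D) htY hcY (hleaf l hl),
        hS.2 _ hS.1 _ hlS hlc.symm]
    · rw [← cloneOnto_apply_of_notMem_of_mem (D := D) htY (hleaf l hl) hcY,
        hS.2 _ hlS _ hS.1 hlc]
      exact hlc
  · obtain ⟨hac, haS⟩ := mem_erase.1 ha
    obtain ⟨hbc, hbS⟩ := mem_erase.1 hb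
    have hab' := (hS.2 _ haS _ hbS hab).not.2 hac
    have hba' := (hS.2 _ hbS _ haS (Ne.symm hab)).not.2 hbc
    rw [cloneOnto_apply_of_notMem (hleaf a ha) (hleaf b hb)] at hab'
    rw [cloneOnto_apply_of_notMem (hleaf b hb) (hleaf a ha)] at hba'
    exact ⟨fun h => hab' ⟨hab, h⟩, fun h => hba' ⟨Ne.symm hab, h⟩⟩

theorem card_stars_cloneOnto_le (hk : 2 ≤ k) (htY : t ∈ Y)
    (hY : ∀ b ∈ A, b ∉ Y → D t b ∨ D b t)
    (hmax : ∀ a ∈ A \ Y, #(closedNonNeighbors D A a) ≤ #Y) :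
    #(stars k (cloneOnto t Y D) A) ≤
      #(stars k (cloneOnto t Y D) (A \ Y)) + #(A \ Y) * (#Y).choose (k - 1) := by
  set E := cloneOnto t Y D
  set In := (A \ Y).filter fun c => D c t ∧ ¬D t c
  set Out := (A \ Y).filter fun b => D t b ∧ ¬D b t
  set I := (Out.powersetCard (k - 1)).filter
    fun L : Finset V => (L : Set V).Pairwise (NonAdj D)
  have hsplit : stars k E A ⊆ stars k E (A \ Y) ∪
      ((In ×ˢ Y.powersetCard (k - 1)) ∪ (Y ×ˢ I)).image fun p => insert p.1 p.2 := by
    intro S hS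
    obtain ⟨hSA, hSk, c, hc⟩ := mem_stars.1 hS
    by_cases hSY : S ⊆ A \ Y
    · exact mem_union_left _ (mem_stars.2 ⟨hSY, hSk, c, hc⟩)
    obtain ⟨x, hxS, hxY⟩ : ∃ x ∈ S, x ∈ Y := by
      by_contra! h
      exact hSY fun x hx => mem_sdiff.2 ⟨hSA hx, h x hx⟩
    have hcard : #(S.erase c) = k - 1 := by rw [card_erase_of_mem hc.1, hSk]
    refine mem_union_right _ (mem_image.2 ⟨(c, S.erase c), ?_, insert_erase hc.1⟩)
    by_cases hcY : c ∈ Y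
    · obtain ⟨hleaves, hpair⟩ := hc.cloneOnto_center_mem hSA htY hcY
      exact mem_union_right _ (mem_product.2
        ⟨hcY, mem_filter.2 ⟨mem_powersetCard.2 ⟨hleaves, hcard⟩, hpair⟩⟩)
    · obtain ⟨hct, hleaves⟩ := hc.cloneOnto_center_notMem hSA htY hY hxS hxY hcY
      exact mem_union_left _ (mem_product.2
        ⟨mem_filter.2 ⟨mem_sdiff.2 ⟨hSA hc.1, hcY⟩, hct⟩,
          mem_powersetCard.2 ⟨hleaves, hcard⟩⟩)
  have hI : #Y * #I ≤ #Out * (#Y).choose (k - 1) := by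
    refine mul_card_pairwise_le (R := NonAdj D) (Z := Out) (by omega) fun a ha => ?_
    refine le_trans (card_le_card fun b hb => ?_) (hmax a (mem_filter.1 ha).1)
    obtain ⟨hbOut, hb⟩ := mem_filter.1 hb
    exact mem_filter.2 ⟨(mem_sdiff.1 (mem_filter.1 hbOut).1).1, hb⟩
  have hInOut : #In + #Out ≤ #(A \ Y) := by
    rw [← card_union_of_disjoint (disjoint_filter.2 fun b _ h h' => h.2 h'.1)]
    exact card_le_card (union_subset (filter_subset _ _) (filter_subset _ _))
  calc #(stars k E A)
      ≤ #(stars k E (A \ Y)) + (#In * (#Y).choose (k - 1) + #Y * #I) := by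
        refine (card_le_card hsplit).trans ((card_union_le _ _).trans (Nat.add_le_add_left ?_ _))
        refine card_image_le.trans ((card_union_le _ _).trans_eq ?_)
        rw [card_product, card_product, card_powersetCard]
    _ ≤ #(stars k E (A \ Y)) + (#In + #Out) * (#Y).choose (k - 1) := by
        rw [add_mul]
        gcongr
    _ ≤ #(stars k E (A \ Y)) + #(A \ Y) * (#Y).choose (k - 1) := by
        gcongr

end Collapse

section Alpha

variable {k : ℕ}

theorem starRatio_le (hk : 2 ≤ k) {x : ℝ} (hx : x ∈ Set.Ico (0 : ℝ) 1) :
    (k : ℝ) * x * (1 - x) ^ (k - 1) / (1 - x ^ k) ≤ k := by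
  obtain ⟨hx0, hx1⟩ := hx
  have hxk : x ^ k < 1 := pow_lt_one₀ hx0 hx1 (by omega)
  rw [div_le_iff₀ (by linarith), mul_assoc]
  gcongr
  calc x * (1 - x) ^ (k - 1) ≤ 1 * (1 - x) ^ 1 :=
        mul_le_mul hx1.le (pow_le_pow_of_le_one (by linarith) (by linarith) (by omega))
          (by positivity) zero_le_one
    _ ≤ 1 - x ^ k := by linarith [pow_le_of_le_one hx0 hx1.le (by omega : k ≠ 0)]

theorem le_alphaStar (hk : 2 ≤ k) {x : ℝ} (hx : x ∈ Set.Ico (0 : ℝ) 1) :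
    (k : ℝ) * x * (1 - x) ^ (k - 1) / (1 - x ^ k) ≤ alphaStar k :=
  le_csSup ⟨k, Set.forall_mem_image.2 fun _ hy => starRatio_le hk hy⟩ ⟨x, hx, rfl⟩

theorem alphaStar_nonneg (hk : 2 ≤ k) : 0 ≤ alphaStar k := by
  simpa using le_alphaStar hk (x := 0) ⟨le_rfl, one_pos⟩

/-- The recursion behind `α_k`: splitting off a class of `y` twins out of `m` vertices. -/
theorem alphaStar_bellman (hk : 2 ≤ k) {y m : ℝ} (hy : 0 < y) (hym : y ≤ m) :
    alphaStar k * (m - y) ^ k + k * (m - y) * y ^ (k - 1) ≤ alphaStar k * m ^ k := by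
  have hm : 0 < m := hy.trans_le hym
  obtain ⟨x, hx0, hx1, rfl⟩ : ∃ x, 0 ≤ x ∧ x < 1 ∧ y = (1 - x) * m :=
    ⟨1 - y / m, by rw [sub_nonneg, div_le_one hm]; exact hym, by simp [hy, hm],
      by field_simp; ring⟩
  have key := (div_le_iff₀ (by linarith [pow_lt_one₀ hx0 hx1 (by omega : k ≠ 0)])).1
    (le_alphaStar hk ⟨hx0, hx1⟩)
  have hmk : m ^ k = m * m ^ (k - 1) := by rw [← pow_succ', Nat.sub_add_cancel (by omega)]
  have hxm : m - (1 - x) * m = x * m := by ring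
  rw [hxm, mul_pow, mul_pow, hmk]
  nlinarith [mul_le_mul_of_nonneg_right key (by positivity : 0 ≤ m * m ^ (k - 1))]

theorem eventually_alphaStar_mul_pow_le (hk : 2 ≤ k) {ε : ℝ} (hε : 0 < ε) :
    ∀ᶠ n : ℕ in atTop, alphaStar k * n ^ k ≤ (alphaStar k + ε) * n.descFactorial k := by
  have hα := alphaStar_nonneg hk
  have hpos : ∀ᶠ n : ℕ in atTop, (n : ℝ) ^ k ≠ 0 :=
    (eventually_gt_atTop 0).mono fun n hn => by positivity
  have hlim := (isEquivalent_iff_tendsto_one hpos).1 (isEquivalent_descFactorial k)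
  have hlt : alphaStar k / (alphaStar k + ε) < 1 := (div_lt_one (by linarith)).2 (by linarith)
  filter_upwards [hlim.eventually (lt_mem_nhds hlt), hpos] with n hn hn0
  rw [Pi.div_apply, div_lt_div_iff₀ (by linarith) (lt_of_le_of_ne (by positivity) hn0.symm)] at hn
  linarith

end Alpha

theorem factorial_mul_choose_pred_le (k y : ℕ) (hk : k ≠ 0) :
    k ! * y.choose (k - 1) ≤ k * y ^ (k - 1) := by
  rw [← Nat.mul_factorial_pred hk, mul_assoc, ← Nat.descFactorial_eq_factorial_mul_choose]
  exact Nat.mul_le_mul_left k (Nat.descFactorial_le_pow y (k - 1))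

theorem factorial_mul_card_stars_le [Finite V] {k : ℕ} (hk : 2 ≤ k) (A : Finset V)
    (D : V → V → Prop) :
    (k ! : ℝ) * #(stars k D A) ≤ alphaStar k * #A ^ k := by
  induction A using Finset.strongInduction generalizing D with
  | H A ih =>
  rcases A.eq_empty_or_nonempty with rfl | hA
  · simp [stars, powersetCard_eq_empty.2 (by simp; omega : #(∅ : Finset V) < k),
      zero_pow (by omega : k ≠ 0)]
  obtain ⟨D₀, hD₀⟩ := Finite.exists_max fun D => #(stars k D A)
  obtain ⟨t, ht, htmax⟩ := exists_max_image A (fun a => #(closedNonNeighbors D₀ A a)) hA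
  set Y := closedNonNeighbors D₀ A t
  have htY : t ∈ Y := mem_filter.2 ⟨ht, Or.inl rfl⟩
  have hYA : Y ⊆ A := filter_subset _ _
  have hE : IsStarMaximal k A (cloneOnto t Y D₀) :=
    IsStarMaximal.cloneOnto_of_nonAdj hD₀ ht hYA fun y hy hyt =>
      (mem_filter.1 hy).2.resolve_left hyt
  have hcount := card_stars_cloneOnto_le (k := k) hk htY
    (fun b hbA hbY => by
      by_contra! h
      exact hbY (mem_filter.2 ⟨hbA, Or.inr h⟩))
    (fun a ha => htmax a (mem_sdiff.1 ha).1)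
  have hIH := ih (A \ Y) (sdiff_ssubset hYA ⟨t, htY⟩) (cloneOnto t Y D₀)
  have hy : (0 : ℝ) < #Y := by exact_mod_cast card_pos.2 ⟨t, htY⟩
  have hsdiff : (#(A \ Y) : ℝ) = #A - #Y := by
    rw [card_sdiff_of_subset hYA, Nat.cast_sub (card_le_card hYA)]
  have hbinom : (k ! : ℝ) * (#Y).choose (k - 1) ≤ k * (#Y : ℝ) ^ (k - 1) := by
    exact_mod_cast factorial_mul_choose_pred_le k #Y (by omega)
  calc (k ! : ℝ) * #(stars k D A)
      ≤ k ! * #(stars k (cloneOnto t Y D₀) A) :=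
        mul_le_mul_of_nonneg_left (by exact_mod_cast (hD₀ D).trans (hE D₀)) (by positivity)
    _ ≤ k ! * #(stars k (cloneOnto t Y D₀) (A \ Y)) +
          #(A \ Y) * (k ! * (#Y).choose (k - 1)) := by
        rw [mul_left_comm, ← mul_add]
        gcongr
        exact_mod_cast hcount
    _ ≤ alphaStar k * #(A \ Y) ^ k + #(A \ Y) * (k * (#Y : ℝ) ^ (k - 1)) := by
        gcongr
    _ ≤ alphaStar k * #A ^ k := by
        rw [hsdiff, ← mul_assoc, mul_comm _ (k : ℝ)]
        exact alphaStar_bellman hk hy (by linarith)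

end StarInducibility

open StarInducibility

theorem star_inducibility_upper (k : ℕ) (hk : 3 ≤ k) (ε : ℝ) (hε : 0 < ε) :
    ∃ N : ℕ, ∀ n : ℕ, N ≤ n → ∀ D : Fin n → Fin n → Prop,
      (starCount k D : ℝ) ≤ (alphaStar k + ε) * (n.choose k : ℝ) := by
  have hk2 : 2 ≤ k := by omega
  obtain ⟨N, hN⟩ := eventually_atTop.1 (eventually_alphaStar_mul_pow_le hk2 hε)
  refine ⟨N, fun n hn D => le_of_mul_le_mul_left ?_ (by positivity : (0 : ℝ) < k !)⟩
  have hstars := factorial_mul_card_stars_le hk2 univ D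
  rw [card_univ, Fintype.card_fin] at hstars
  calc (k ! : ℝ) * starCount k D ≤ k ! * #(stars k D univ) := by
        gcongr
        exact_mod_cast starCount_le_card_stars k D
    _ ≤ alphaStar k * n ^ k := hstars
    _ ≤ (alphaStar k + ε) * n.descFactorial k := hN n hn
    _ = k ! * ((alphaStar k + ε) * n.choose k) := by
        rw [Nat.descFactorial_eq_factorial_mul_choose]
        push_cast
        ring
end

section
/- For every integer k ≥ 3 and every ε > 0, there exists N such that for every n ≥ N there exists a digraph D on n vertices in which the number of k-element vertex subsets inducing a copy of the directed star S⃗_k is at least (α_k − ε)·C(n,k), where α_k = sup_{x ∈ [0,1)} k·x·(1−x)^{k−1}/(1−x^k). -/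
open Finset Filter Topology
open scoped Nat

section LevelDigraph

variable {V : Type} [DecidableEq V]

lemma isStar_insert_of_levels {ℓ : V → ℕ} {v : V} {T : Finset V} {j : ℕ} (hv : j < ℓ v)
    (hT : ∀ w ∈ T, ℓ w = j) :
    ∀ u ∈ insert v T, ∀ w ∈ insert v T, (ℓ w < ℓ u ↔ u = v ∧ w ≠ v) := by
  have level : ∀ x ∈ insert v T, x = v ∨ (x ≠ v ∧ ℓ x = j) := by
    intro x hx
    rcases mem_insert.1 hx with rfl | hxT
    · exact .inl rfl
    · exact .inr ⟨by rintro rfl; exact hv.ne' (hT _ hxT), hT x hxT⟩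
  intro u hu w hw
  rcases level u hu with rfl | ⟨hu, hu'⟩ <;> rcases level w hw with rfl | ⟨hw, hw'⟩ <;> grind

theorem sum_card_mul_choose_le_starCount [Fintype V] (ℓ : V → ℕ) {k : ℕ} (hk : 2 ≤ k)
    (s : Finset ℕ) :
    ∑ j ∈ s, #{v | j < ℓ v} * (#{v | ℓ v = j}).choose (k - 1)
      ≤ starCount k (fun u w => ℓ w < ℓ u) := by
  set stars := s.sigma fun j =>
    ({v | j < ℓ v} : Finset V) ×ˢ ({v | ℓ v = j} : Finset V).powersetCard (k - 1)
  have mem_stars : ∀ j v T, ⟨j, v, T⟩ ∈ stars ↔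
      j ∈ s ∧ j < ℓ v ∧ (∀ w ∈ T, ℓ w = j) ∧ #T = k - 1 := by
    simp [stars, subset_iff]
  have center_notMem : ∀ {j v T}, ⟨j, v, T⟩ ∈ stars → v ∉ T := fun hp hv =>
    have ⟨_, hlt, hT, _⟩ := (mem_stars _ _ _).1 hp
    hlt.ne' (hT _ hv)
  calc ∑ j ∈ s, #{v | j < ℓ v} * (#{v | ℓ v = j}).choose (k - 1)
      = #stars := by simp [stars, card_sigma, card_product, card_powersetCard]
    _ = (stars : Set ((_ : ℕ) × V × Finset V)).ncard := (Set.ncard_coe_finset _).symm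
    _ ≤ _ := by
      refine Set.ncard_le_ncard_of_injOn (fun p => insert p.2.1 p.2.2) ?_ ?_ (Set.toFinite _)
      · rintro ⟨j, v, T⟩ h
        obtain ⟨-, hv, hT, hcard⟩ := (mem_stars _ _ _).1 h
        refine ⟨?_, v, mem_insert_self v T, isStar_insert_of_levels hv hT⟩
        rw [card_insert_of_notMem (center_notMem h), hcard]
        omega
      · rintro ⟨j, v, T⟩ h ⟨j', v', T'⟩ h' heq
        obtain ⟨-, hv, hT, hcard⟩ := (mem_stars _ _ _).1 h
        obtain ⟨-, hv', hT', -⟩ := (mem_stars _ _ _).1 h'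
        simp only at heq
        -- otherwise each centre would be a leaf of the other star, one level below itself
        obtain rfl : v = v' := by
          by_contra hne
          have h₁ : v' ∈ T :=
            (mem_insert.1 (heq ▸ mem_insert_self v' T')).resolve_left (Ne.symm hne)
          have h₂ : v ∈ T' :=
            (mem_insert.1 (heq.symm ▸ mem_insert_self v T)).resolve_left hne
          have := hT v' h₁
          have := hT' v h₂
          omega
        obtain rfl : T = T' := by
          rw [← erase_insert (center_notMem h), heq, erase_insert (center_notMem h')]
        obtain ⟨w, hw⟩ : T.Nonempty := card_pos.1 (by omega)
        obtain rfl : j = j' := (hT w hw).symm.trans (hT' w hw)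
        rfl

end LevelDigraph

theorem exists_levels_of_antitone {n : ℕ} (t : ℕ) {m : ℕ → ℕ} (hm : Antitone m)
    (hm0 : m 0 = n) :
    ∃ ℓ : Fin n → ℕ, ∀ j < t, #{v | j < ℓ v} = m (j + 1) ∧ #{v | ℓ v = j} = m j - m (j + 1) := by
  set ℓ : Fin n → ℕ := fun v => Nat.findGreatest (fun j => (v : ℕ) < m j) t
  have le_level_iff : ∀ i ≤ t, ∀ v, i ≤ ℓ v ↔ (v : ℕ) < m i := fun i hi v =>
    ⟨fun h => (Nat.findGreatest_spec (P := fun j => (v : ℕ) < m j) t.zero_le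
        (by rw [hm0]; exact v.isLt)).trans_le (hm h),
      Nat.le_findGreatest (P := fun j => (v : ℕ) < m j) hi⟩
  have card_le_level : ∀ i ≤ t, #{v | i ≤ ℓ v} = m i := fun i hi => by
    rw [filter_congr fun v _ => le_level_iff i hi v, Fin.card_filter_val_lt,
      min_eq_right (hm0 ▸ hm i.zero_le)]
  refine ⟨ℓ, fun j hj => ⟨card_le_level (j + 1) hj, ?_⟩⟩
  have split : #{v | j ≤ ℓ v} = #{v | ℓ v = j} + #{v | j + 1 ≤ ℓ v} := by
    rw [← card_union_of_disjoint (disjoint_filter.2 fun v _ h => by omega)]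
    congr 1
    ext v
    simp only [mem_filter, mem_univ, true_and, mem_union]
    omega
  have := card_le_level j hj.le
  have := card_le_level (j + 1) hj
  omega

theorem tendsto_cast_choose_div_pow {a : ℕ → ℕ} {y : ℝ}
    (ha : Tendsto (fun n => (a n : ℝ) / n) atTop (𝓝 y)) (r : ℕ) :
    Tendsto (fun n => ((a n).choose r : ℝ) / n ^ r) atTop (𝓝 (y ^ r / r !)) := by
  have prod_form : ∀ n : ℕ, ((a n).choose r : ℝ) / n ^ r =
      (∏ i ∈ range r, ((a n : ℝ) / n - i / n)) / r ! := fun n => by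
    rw [Nat.cast_choose_eq_descPochhammer_div, descPochhammer_eval_eq_prod_range, div_right_comm]
    simp_rw [← sub_div]
    rw [prod_div_distrib, prod_const, card_range]
  simp_rw [prod_form]
  refine Tendsto.div_const ?_ _
  convert tendsto_finsetProd (range r) fun i _ =>
    ha.sub (tendsto_const_div_atTop_nhds_zero_nat (i : ℝ)) using 1
  simp

theorem tendsto_div_choose_of_tendsto_div_pow {u : ℕ → ℝ} {L : ℝ} (k : ℕ)
    (h : Tendsto (fun n => u n / n ^ k) atTop (𝓝 L)) :
    Tendsto (fun n => u n / n.choose k) atTop (𝓝 (L * k !)) := by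
  have hn : Tendsto (fun n : ℕ => (n : ℝ) / n) atTop (𝓝 1) :=
    tendsto_const_nhds.congr' <| (eventually_ne_atTop 0).mono fun n hn => by field_simp
  have hchoose := tendsto_cast_choose_div_pow (a := id) hn k
  rw [one_pow] at hchoose
  have hdiv := h.div hchoose (by positivity)
  rw [div_div_eq_mul_div, div_one] at hdiv
  refine hdiv.congr' ((eventually_ne_atTop 0).mono fun n hn => ?_)
  exact div_div_div_cancel_right₀ (by positivity) _ _

-- The number of vertices of depth at least `j` in the iterated blow-up with ratio `x`.
noncomputable def blowupSize (x : ℝ) (n j : ℕ) : ℕ := ⌈x ^ j * n⌉₊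

noncomputable def blowupStarBound (k t : ℕ) (x : ℝ) (n : ℕ) : ℕ :=
  ∑ j ∈ range t,
    blowupSize x n (j + 1) * (blowupSize x n j - blowupSize x n (j + 1)).choose (k - 1)

lemma blowupSize_zero (x : ℝ) (n : ℕ) : blowupSize x n 0 = n := by
  simp [blowupSize]

section Blowup

variable {x : ℝ}

lemma blowupSize_antitone (hx0 : 0 ≤ x) (hx1 : x ≤ 1) (n : ℕ) : Antitone (blowupSize x n) :=
  antitone_nat_of_succ_le fun j => Nat.ceil_mono <|
    mul_le_mul_of_nonneg_right (pow_le_pow_of_le_one hx0 hx1 j.le_succ) n.cast_nonneg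

lemma tendsto_blowupSize_div (hx0 : 0 ≤ x) (j : ℕ) :
    Tendsto (fun n => (blowupSize x n j : ℝ) / n) atTop (𝓝 (x ^ j)) :=
  (tendsto_nat_ceil_mul_div_atTop (pow_nonneg hx0 j)).comp tendsto_natCast_atTop_atTop

theorem exists_digraph_blowupStarBound_le_starCount {k : ℕ} (hk : 2 ≤ k) (hx0 : 0 ≤ x)
    (hx1 : x ≤ 1) (t n : ℕ) :
    ∃ D : Fin n → Fin n → Prop, blowupStarBound k t x n ≤ starCount k D := by
  obtain ⟨ℓ, hℓ⟩ :=
    exists_levels_of_antitone t (blowupSize_antitone hx0 hx1 n) (blowupSize_zero x n)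
  refine ⟨fun u w => ℓ w < ℓ u,
    le_of_eq_of_le ?_ (sum_card_mul_choose_le_starCount ℓ hk (range t))⟩
  refine sum_congr rfl fun j hj => ?_
  rw [(hℓ j (mem_range.1 hj)).1, (hℓ j (mem_range.1 hj)).2]

theorem tendsto_blowupStarBound_div_pow {k : ℕ} (hk : 1 ≤ k) (hx0 : 0 ≤ x) (hx1 : x ≤ 1)
    (t : ℕ) :
    Tendsto (fun n => (blowupStarBound k t x n : ℝ) / n ^ k) atTop
      (𝓝 (∑ j ∈ range t, x ^ (j + 1) * ((x ^ j - x ^ (j + 1)) ^ (k - 1) / (k - 1)!))) := by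
  simp only [blowupStarBound, Nat.cast_sum, Nat.cast_mul, sum_div]
  refine tendsto_finsetSum _ fun j _ => ?_
  have hlevel : Tendsto (fun n => ((blowupSize x n j - blowupSize x n (j + 1) : ℕ) : ℝ) / n)
      atTop (𝓝 (x ^ j - x ^ (j + 1))) := by
    refine ((tendsto_blowupSize_div hx0 j).sub (tendsto_blowupSize_div hx0 (j + 1))).congr
      fun n => ?_
    rw [Nat.cast_sub (blowupSize_antitone hx0 hx1 n j.le_succ), sub_div]
  convert (tendsto_blowupSize_div hx0 (j + 1)).mul (tendsto_cast_choose_div_pow hlevel (k - 1))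
    using 2 with n
  rw [← mul_div_mul_comm, ← pow_succ', Nat.sub_add_cancel hk]

lemma sum_range_pow_succ_mul_sub_pow {k : ℕ} (hk : 1 ≤ k) (hx0 : 0 ≤ x) (hx1 : x < 1) (t : ℕ) :
    ∑ j ∈ range t, x ^ (j + 1) * (x ^ j - x ^ (j + 1)) ^ (k - 1) =
      x * (1 - x) ^ (k - 1) * (1 - (x ^ k) ^ t) / (1 - x ^ k) := by
  have hxk : x ^ k < 1 := pow_lt_one₀ hx0 hx1 (by omega)
  obtain ⟨r, rfl⟩ : ∃ r, k = r + 1 := ⟨k - 1, by omega⟩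
  have term : ∀ j, x ^ (j + 1) * (x ^ j - x ^ (j + 1)) ^ (r + 1 - 1) =
      x * (1 - x) ^ (r + 1 - 1) * (x ^ (r + 1)) ^ j := fun j => by
    rw [Nat.add_sub_cancel, show x ^ j - x ^ (j + 1) = x ^ j * (1 - x) by ring, mul_pow,
      ← pow_mul, ← pow_mul]
    ring
  rw [sum_congr rfl fun j _ => term j, ← mul_sum, geom_sum_eq hxk.ne]
  have : 1 - x ^ (r + 1) ≠ 0 := by linarith
  have : x ^ (r + 1) - 1 ≠ 0 := by linarith
  field_simp
  ring

theorem tendsto_blowupStarBound_div_choose {k : ℕ} (hk : 1 ≤ k) (hx0 : 0 ≤ x) (hx1 : x < 1)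
    (t : ℕ) :
    Tendsto (fun n => (blowupStarBound k t x n : ℝ) / n.choose k) atTop
      (𝓝 (k * x * (1 - x) ^ (k - 1) / (1 - x ^ k) * (1 - (x ^ k) ^ t))) := by
  convert tendsto_div_choose_of_tendsto_div_pow k
    (tendsto_blowupStarBound_div_pow hk hx0 hx1.le t) using 2
  simp_rw [← mul_div_assoc]
  rw [← sum_div, sum_range_pow_succ_mul_sub_pow hk hx0 hx1,
    ← Nat.mul_factorial_pred (by omega : k ≠ 0)]
  have : 1 - x ^ k ≠ 0 := (sub_pos.2 (pow_lt_one₀ hx0 hx1 (by omega))).ne'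
  push_cast
  field_simp

end Blowup

theorem star_inducibility_lower (k : ℕ) (hk : 3 ≤ k) (ε : ℝ) (hε : 0 < ε) :
    ∃ N : ℕ, ∀ n : ℕ, N ≤ n → ∃ D : Fin n → Fin n → Prop,
      (alphaStar k - ε) * (n.choose k : ℝ) ≤ (starCount k D : ℝ) := by
  obtain ⟨_, ⟨x, ⟨hx0, hx1⟩, rfl⟩, hx⟩ :=
    exists_lt_of_lt_csSup (Set.image_nonempty.2 ⟨0, Set.left_mem_Ico.2 one_pos⟩)
      (sub_lt_self (alphaStar k) hε)
  have hxk : Tendsto (fun t : ℕ => (x ^ k) ^ t) atTop (𝓝 0) :=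
    tendsto_pow_atTop_nhds_zero_of_lt_one (by positivity) (pow_lt_one₀ hx0 hx1 (by omega))
  obtain ⟨t, ht⟩ := ((((tendsto_const_nhds (x := (1 : ℝ))).sub hxk).const_mul
    ((k : ℝ) * x * (1 - x) ^ (k - 1) / (1 - x ^ k))).eventually
      (lt_mem_nhds (by rwa [sub_zero, mul_one]))).exists
  obtain ⟨N, hN⟩ := eventually_atTop.1 <|
    ((tendsto_blowupStarBound_div_choose (by omega : 1 ≤ k) hx0 hx1 t).eventually
      (lt_mem_nhds ht)).and (eventually_ge_atTop k)
  refine ⟨N, fun n hn => ?_⟩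
  obtain ⟨hlt, hkn⟩ := hN n hn
  obtain ⟨D, hD⟩ :=
    exists_digraph_blowupStarBound_le_starCount (by omega : 2 ≤ k) hx0 hx1.le t n
  have hchoose : (0 : ℝ) < n.choose k := by exact_mod_cast Nat.choose_pos hkn
  exact ⟨D, ((lt_div_iff₀ hchoose).1 hlt).le.trans (by exact_mod_cast hD)⟩
end

section
/- Let k ≥ 3 be an integer, let D be a loopless digraph on a finite vertex set V, and let A, B be disjoint nonempty subsets of V such that no two vertices of A ∪ B are joined by an arc in either direction, all vertices of A have identical out-neighborhoods and identical in-neighborhoods, and all vertices of B have identical out-neighborhoods and identical in-neighborhoods. Fix a ∈ A and b ∈ B, and define digraphs D_A and D_B on V by D_A.Adj u w ↔ D.Adj (r_A u) (r_A w) where r_A u = a if u ∈ B and r_A u = u otherwise, and D_B.Adj u w ↔ D.Adj (r_B u) (r_B w) where r_B u = b if u ∈ A and r_B u = u otherwise. Then the number of k-subsets of V inducing a copy of S⃗_k in D is at most the maximum of the corresponding numbers for D_A and for D_B. -/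
/-!
Write `E = A ∪ B` and sort the induced `k`-stars `S` of `D` by `T = S \ E`; let `f(T)`, `f_A(T)`,
`f_B(T)` count the completions of `T` by subsets of `E` in `D`, `D_A`, `D_B`, and `m = k - |T|`.
In `D_A` all of `E` is a class of pairwise non-adjacent twins of `a`, so for `|T| < k`, `f_A(T)` is `0` or
`C(|E|, m)`, and a completion in `D` that uses a vertex of `A` is still one in `D_A`. Hence, if the
completions in `D` use the vertices `F ⊆ E`, then
`|E| f(T) ≤ |E| C(|F|, m) ≤ |F| C(|E|, m) ≤ |A| f_A(T) + |B| f_B(T)`.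
Summing over `T` bounds `(|A| + |B|)` times the star count of `D` by the weighted sum of those of
`D_A` and `D_B`.
-/

open scoped Classical

open Finset

theorem Nat.mul_choose_le_mul_choose {m n r : ℕ} (hmn : m ≤ n) (hr : r ≠ 0) :
    n * m.choose r ≤ m * n.choose r := by
  obtain ⟨r, rfl⟩ := Nat.exists_eq_succ_of_ne_zero hr
  rcases m with _ | m
  · simp
  obtain ⟨n, rfl⟩ : ∃ n', n = n' + 1 := ⟨n - 1, by omega⟩
  refine Nat.le_of_mul_le_mul_right ?_ r.succ_pos
  calc (n + 1) * (m + 1).choose (r + 1) * (r + 1)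
      = (n + 1) * ((m + 1) * m.choose r) := by rw [mul_assoc, Nat.add_one_mul_choose_eq]
    _ ≤ (n + 1) * ((m + 1) * n.choose r) := by gcongr; omega
    _ = (m + 1) * (n + 1).choose (r + 1) * (r + 1) := by
        rw [mul_assoc (m + 1), ← Nat.add_one_mul_choose_eq]; ring

variable {V : Type}

def IsStarAt (D : V → V → Prop) (S : Finset V) (v : V) : Prop :=
  ∀ u ∈ S, ∀ w ∈ S, (D u w ↔ (u = v ∧ w ≠ v))

def IsStar (D : V → V → Prop) (S : Finset V) : Prop :=
  ∃ v ∈ S, IsStarAt D S v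

def IsTwinClass (D : V → V → Prop) (C : Set V) : Prop :=
  ∀ u ∈ C, ∀ v ∈ C, ∀ w, (D u w ↔ D v w) ∧ (D w u ↔ D w v)

def IsIndependent (D : V → V → Prop) (C : Set V) : Prop :=
  ∀ u ∈ C, ∀ w ∈ C, ¬ D u w

def mergeInto (D : V → V → Prop) (B : Set V) (a : V) : V → V → Prop :=
  fun u w => D (if u ∈ B then a else u) (if w ∈ B then a else w)

section Star

variable {D D' : V → V → Prop} {S S' : Finset V} {u v v' w : V}

theorem IsStarAt.comap (h : IsStarAt D S v) (f : V → V) (hf : ∀ z ∈ S', f z ∈ S)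
    (hv : ∀ z ∈ S', f z = v ↔ z = v') (hD : ∀ u ∈ S', ∀ w ∈ S', D' u w ↔ D (f u) (f w)) :
    IsStarAt D' S' v' := by
  intro u hu w hw
  rw [hD u hu w hw, h _ (hf u hu) _ (hf w hw), hv u hu, Ne, hv w hw]

theorem IsStarAt.ne_of_not_adj (h : IsStarAt D S v) (hu : u ∈ S) (hw : w ∈ S) (hne : u ≠ w)
    (hD : ¬ D u w) : u ≠ v := by
  rintro rfl
  exact hD ((h u hu w hw).2 ⟨rfl, hne.symm⟩)

theorem isStar_congr (h : ∀ u ∈ S, ∀ w ∈ S, D u w ↔ D' u w) : IsStar D S ↔ IsStar D' S := by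
  unfold IsStar IsStarAt
  refine exists_congr fun _ => and_congr_right fun _ =>
    forall₂_congr fun u hu => forall₂_congr fun w hw => ?_
  rw [h u hu w hw]

end Star

section TwinClass

variable {D : V → V → Prop} {A B C : Set V} {a : V}

theorem IsTwinClass.adj_comp_iff (hC : IsTwinClass D C) {f g : V → V}
    (hfg : ∀ z, f z = g z ∨ f z ∈ C ∧ g z ∈ C) (u w : V) :
    D (f u) (f w) ↔ D (g u) (g w) := by
  calc D (f u) (f w) ↔ D (g u) (f w) := by
        rcases hfg u with h | ⟨h₁, h₂⟩
        · rw [h]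
        · exact (hC _ h₁ _ h₂ _).1
    _ ↔ D (g u) (g w) := by
        rcases hfg w with h | ⟨h₁, h₂⟩
        · rw [h]
        · exact (hC _ h₁ _ h₂ _).2

/-- Collapsing `C` onto one vertex of `W` (the centre, if the centre lies in `W`) maps `T ∪ W'`
into the star `T ∪ W`, preserving adjacency. -/
theorem IsStar.union_of_card_eq (hC : IsTwinClass D C) (hCi : IsIndependent D C)
    {T W W' : Finset V} (hT : Disjoint (T : Set V) C) (hW : (W : Set V) ⊆ C)
    (hW' : (W' : Set V) ⊆ C) (hcard : #W' = #W) (hne : W.Nonempty) (h : IsStar D (T ∪ W)) :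
    IsStar D (T ∪ W') := by
  obtain ⟨v, hv, hst⟩ := h
  have hTC : ∀ t ∈ T, t ∉ C := fun t ht => Set.disjoint_left.1 hT ht
  have collapse : ∀ x ∈ W, ∀ v' ∈ T ∪ W',
      (∀ z ∈ T ∪ W', (if z ∈ C then x else z) = v ↔ z = v') → IsStar D (T ∪ W') := by
    intro x hx v' hv' hcentre
    refine ⟨v', hv', hst.comap _ (fun z hz => ?_) hcentre fun u _ w _ => ?_⟩
    · split_ifs with hzC
      · exact mem_union_right _ hx
      · rcases mem_union.1 hz with hzT | hzW'
        · exact mem_union_left _ hzT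
        · exact absurd (hW' hzW') hzC
    · refine (hC.adj_comp_iff (f := fun z => if z ∈ C then x else z) (g := id) (fun z => ?_)
        u w).symm
      split_ifs with hzC
      · exact .inr ⟨hW hx, hzC⟩
      · exact .inl rfl
  rcases mem_union.1 hv with hvT | hvW
  · obtain ⟨x, hx⟩ := hne
    refine collapse x hx v (mem_union_left _ hvT) fun z _ => ?_
    split_ifs with hzC
    · exact iff_of_false (fun h => hTC v hvT (h ▸ hW hx)) (fun h => hTC v hvT (h ▸ hzC))
    · rfl
  · have hWv : W = {v} := by
      refine eq_singleton_iff_unique_mem.2 ⟨hvW, fun w hw => ?_⟩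
      by_contra hwv
      exact hCi v (hW hvW) w (hW hw) ((hst v hv w (mem_union_right _ hw)).2 ⟨rfl, hwv⟩)
    obtain ⟨v', rfl⟩ := card_eq_one.1 (hcard.trans (by rw [hWv, card_singleton]))
    refine collapse v hvW v' (mem_union_right _ (mem_singleton_self _)) fun z hz => ?_
    have hv'C : v' ∈ C := hW' (mem_singleton_self _)
    split_ifs with hzC
    · simp only [true_iff]
      rcases mem_union.1 hz with hzT | hzv'
      · exact absurd hzC (hTC z hzT)
      · exact mem_singleton.1 hzv'
    · exact iff_of_false (fun h => hzC (h ▸ hW hvW)) (fun h => hzC (h ▸ hv'C))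

theorem ite_mem_of_mem_union (ha : a ∈ A) {u : V} (hu : u ∈ A ∪ B) :
    (if u ∈ B then a else u) ∈ A := by
  split_ifs with huB
  · exact ha
  · exact hu.resolve_right huB

theorem mergeInto_iff_of_notMem {u w : V} (hu : u ∉ B) (hw : w ∉ B) :
    mergeInto D B a u w ↔ D u w := by
  simp only [mergeInto, if_neg hu, if_neg hw]

theorem IsTwinClass.mergeInto (hA : IsTwinClass D A) (ha : a ∈ A) :
    IsTwinClass (mergeInto D B a) (A ∪ B) :=
  fun _ hu _ hv _ => hA _ (ite_mem_of_mem_union ha hu) _ (ite_mem_of_mem_union ha hv) _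

theorem IsIndependent.mergeInto (hA : IsIndependent D A) (ha : a ∈ A) :
    IsIndependent (mergeInto D B a) (A ∪ B) :=
  fun _ hu _ hw => hA _ (ite_mem_of_mem_union ha hu) _ (ite_mem_of_mem_union ha hw)

/-- The vertices of `S` in `B` are leaves, like `x`, so they may be traded for `x`. -/
theorem IsStar.mergeInto (hA : IsTwinClass D A) (hAB : IsIndependent D (A ∪ B))
    (hdisj : Disjoint A B) (ha : a ∈ A) {S : Finset V} {x : V} (hxS : x ∈ S) (hxA : x ∈ A)
    (h : IsStar D S) : IsStar (mergeInto D B a) S := by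
  obtain ⟨v, hv, hst⟩ := h
  refine ⟨v, hv, hst.comap (fun z => if z ∈ B then x else z) (fun z hz => ?_) (fun z hz => ?_)
    fun u _ w _ => hA.adj_comp_iff (f := fun z => if z ∈ B then a else z)
      (g := fun z => if z ∈ B then x else z) (fun z => ?_) u w⟩
  · split_ifs
    · exact hxS
    · exact hz
  · split_ifs with hzB
    · have hxz : x ≠ z := fun h => Set.disjoint_left.1 hdisj hxA (h ▸ hzB)
      exact iff_of_false
        (hst.ne_of_not_adj hxS hz hxz (hAB _ (.inl hxA) _ (.inr hzB)))
        (hst.ne_of_not_adj hz hxS hxz.symm (hAB _ (.inr hzB) _ (.inl hxA)))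
    · rfl
  · split_ifs
    · exact .inr ⟨ha, hxA⟩
    · exact .inl rfl

end TwinClass

section Counting

noncomputable def starCompletions (k : ℕ) (D : V → V → Prop) (E T : Finset V) :
    Finset (Finset V) :=
  {W ∈ E.powerset | #T + #W = k ∧ IsStar D (T ∪ W)}

variable {k : ℕ} {D : V → V → Prop} {A B : Set V} {a b : V} {E F T W : Finset V}

theorem mem_starCompletions :
    W ∈ starCompletions k D E T ↔ W ⊆ E ∧ #T + #W = k ∧ IsStar D (T ∪ W) := by
  rw [starCompletions, mem_filter, mem_powerset]

theorem starCount_eq_sum_card_starCompletions [Fintype V] (k : ℕ) (D : V → V → Prop)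
    (E : Finset V) :
    starCount k D = ∑ T ∈ Eᶜ.powerset, #(starCompletions k D E T) := by
  have hset : {S : Finset V | S.card = k ∧ IsStar D S} =
      (({S | #S = k ∧ IsStar D S} : Finset (Finset V)) : Set (Finset V)) := by
    ext; simp
  change {S : Finset V | S.card = k ∧ IsStar D S}.ncard = _
  rw [hset, Set.ncard_coe_finset,
    card_eq_sum_card_fiberwise (f := (· \ E)) (t := Eᶜ.powerset)]
  · refine sum_congr rfl fun T hT => ?_
    have hTE : Disjoint T E := subset_compl_iff_disjoint_right.1 (mem_powerset.1 hT)
    have hunion : ∀ W ⊆ E, (T ∪ W) ∩ E = W ∧ (T ∪ W) \ E = T := fun W hW =>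
      ⟨by rw [union_inter_distrib_right, disjoint_iff_inter_eq_empty.1 hTE, inter_eq_left.2 hW,
          empty_union],
        by rw [union_sdiff_distrib, sdiff_eq_empty_iff_subset.2 hW, union_empty, hTE.sdiff_eq_left]⟩
    refine card_nbij' (· ∩ E) (T ∪ ·) (fun S hS => ?_) (fun W hW => ?_) (fun S hS => ?_)
      fun W hW => (hunion W (mem_starCompletions.1 hW).1).1
    · simp only [coe_filter, mem_filter, mem_univ, true_and] at hS
      obtain ⟨⟨hSk, hSstar⟩, hST⟩ := hS
      refine mem_starCompletions.2 ⟨inter_subset_right, ?_, ?_⟩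
      · rw [← hST, card_sdiff_add_card_inter, hSk]
      · rwa [← hST, sdiff_union_inter]
    · obtain ⟨hWE, hTW, hWstar⟩ := mem_starCompletions.1 hW
      simp only [coe_filter, mem_filter, mem_univ, true_and]
      exact ⟨⟨by rw [card_union_of_disjoint (hTE.mono_right hWE), hTW], hWstar⟩, (hunion W hWE).2⟩
    · simp only [coe_filter, mem_filter, mem_univ, true_and] at hS
      simp only [← hS.2, sdiff_union_inter]
  · intro S _
    simp [sdiff_eq_inter_compl]

theorem card_starCompletions_le (hF : ∀ W ∈ starCompletions k D E T, W ⊆ F) :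
    #(starCompletions k D E T) ≤ (#F).choose (k - #T) := by
  rw [← card_powersetCard]
  refine card_le_card fun W hW => mem_powersetCard.2 ⟨hF W hW, ?_⟩
  have := (mem_starCompletions.1 hW).2.1
  omega

theorem choose_le_card_starCompletions (hC : IsTwinClass D E) (hCi : IsIndependent D E)
    (hT : Disjoint T E) (hW : W ∈ starCompletions k D E T) (hne : W.Nonempty) :
    (#E).choose (k - #T) ≤ #(starCompletions k D E T) := by
  obtain ⟨hWE, hTW, hWstar⟩ := mem_starCompletions.1 hW
  rw [← card_powersetCard]
  refine card_le_card fun W' hW' => ?_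
  obtain ⟨hW'E, hW'card⟩ := mem_powersetCard.1 hW'
  refine mem_starCompletions.2 ⟨hW'E, by omega, ?_⟩
  exact hWstar.union_of_card_eq hC hCi (disjoint_coe.2 hT) (coe_subset.2 hWE)
    (coe_subset.2 hW'E) (by omega) hne

theorem starCompletions_mergeInto_of_le (hB : B ⊆ E) (hT : Disjoint T E) (hk : k ≤ #T) :
    starCompletions k (mergeInto D B a) E T = starCompletions k D E T := by
  refine filter_congr fun W _ => and_congr_right fun hTW => ?_
  obtain rfl : W = ∅ := card_eq_zero.1 (by omega)
  have hTB : ∀ t ∈ T, t ∉ B := fun t ht htB => disjoint_left.1 hT ht (hB htB)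
  rw [union_empty]
  exact isStar_congr fun u hu w hw => mergeInto_iff_of_notMem (hTB u hu) (hTB w hw)

theorem card_eq_card_toFinset_add_card_toFinset [Fintype V] (hdisj : Disjoint A B)
    (hE : (E : Set V) = A ∪ B) : #E = #A.toFinset + #B.toFinset := by
  rw [← card_union_of_disjoint (Set.disjoint_toFinset.2 hdisj), ← Set.toFinset_union]
  congr 1
  ext x
  rw [Set.mem_toFinset, ← hE, mem_coe]

/-- If some `D`-completion of `T` uses a vertex of `A`, then every subset of `E` of the right
size completes `T` in the merged digraph. -/
theorem card_filter_mul_choose_le [Fintype V] (hA : IsTwinClass D A)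
    (hAB : IsIndependent D (A ∪ B)) (hdisj : Disjoint A B) (ha : a ∈ A)
    (hE : (E : Set V) = A ∪ B) (hT : Disjoint T E) :
    #{x ∈ (starCompletions k D E T).biUnion id | x ∈ A} * (#E).choose (k - #T) ≤
      #A.toFinset * #(starCompletions k (mergeInto D B a) E T) := by
  rcases eq_empty_or_nonempty {x ∈ (starCompletions k D E T).biUnion id | x ∈ A} with h | ⟨x, hx⟩
  · simp [h]
  obtain ⟨hxF, hxA⟩ := mem_filter.1 hx
  obtain ⟨W, hW, hxW⟩ := mem_biUnion.1 hxF
  obtain ⟨hWE, hTW, hWstar⟩ := mem_starCompletions.1 hW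
  refine Nat.mul_le_mul (card_le_card fun y hy => Set.mem_toFinset.2 (mem_filter.1 hy).2) ?_
  have hAi : IsIndependent D A := fun u hu w hw => hAB u (.inl hu) w (.inl hw)
  refine choose_le_card_starCompletions (hE ▸ hA.mergeInto ha) (hE ▸ hAi.mergeInto ha) hT
    (mem_starCompletions.2 ⟨hWE, hTW, ?_⟩) ⟨x, hxW⟩
  exact hWstar.mergeInto hA hAB hdisj ha (mem_union_right _ hxW) hxA

theorem card_mul_card_starCompletions_le [Fintype V] (hA : IsTwinClass D A)
    (hB : IsTwinClass D B) (hAB : IsIndependent D (A ∪ B)) (hdisj : Disjoint A B) (ha : a ∈ A)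
    (hb : b ∈ B) (hE : (E : Set V) = A ∪ B) (hT : Disjoint T E) :
    #E * #(starCompletions k D E T) ≤
      #A.toFinset * #(starCompletions k (mergeInto D B a) E T) +
        #B.toFinset * #(starCompletions k (mergeInto D A b) E T) := by
  rcases le_or_gt k #T with hk | hk
  · rw [starCompletions_mergeInto_of_le (hE ▸ Set.subset_union_right) hT hk,
      starCompletions_mergeInto_of_le (hE ▸ Set.subset_union_left) hT hk,
      card_eq_card_toFinset_add_card_toFinset hdisj hE, add_mul]
  set F := (starCompletions k D E T).biUnion id
  have hFE : F ⊆ E := biUnion_subset.2 fun W hW => (mem_starCompletions.1 hW).1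
  have hFAB : #F ≤ #{x ∈ F | x ∈ A} + #{x ∈ F | x ∈ B} := by
    refine (card_le_card fun x hx => ?_).trans (card_union_le _ _)
    have hxE : x ∈ (E : Set V) := hFE hx
    rw [hE] at hxE
    simpa [hx] using hxE
  calc #E * #(starCompletions k D E T) ≤ #E * (#F).choose (k - #T) := by
        gcongr
        exact card_starCompletions_le fun W hW => subset_biUnion_of_mem id hW
    _ ≤ #F * (#E).choose (k - #T) := Nat.mul_choose_le_mul_choose (card_le_card hFE) (by omega)
    _ ≤ #{x ∈ F | x ∈ A} * (#E).choose (k - #T) + #{x ∈ F | x ∈ B} * (#E).choose (k - #T) := by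
        rw [← add_mul]
        gcongr
    _ ≤ _ := add_le_add (card_filter_mul_choose_le hA hAB hdisj ha hE hT)
        (card_filter_mul_choose_le hB (Set.union_comm A B ▸ hAB) hdisj.symm hb
          (hE.trans (Set.union_comm A B)) hT)

theorem card_mul_starCount_le [Fintype V] (hA : IsTwinClass D A) (hB : IsTwinClass D B)
    (hAB : IsIndependent D (A ∪ B)) (hdisj : Disjoint A B) (ha : a ∈ A) (hb : b ∈ B)
    (hE : (E : Set V) = A ∪ B) :
    #E * starCount k D ≤
      #A.toFinset * starCount k (mergeInto D B a) +
        #B.toFinset * starCount k (mergeInto D A b) := by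
  simp only [starCount_eq_sum_card_starCompletions k _ E, mul_sum, ← sum_add_distrib]
  exact sum_le_sum fun T hT => card_mul_card_starCompletions_le hA hB hAB hdisj ha hb hE
    (subset_compl_iff_disjoint_right.1 (mem_powerset.1 hT))

end Counting

theorem merge_classes_general {V : Type} [Fintype V] (k : ℕ)
    (D : V → V → Prop)
    (A B : Set V) (hdisj : Disjoint A B)
    (hnoarc : ∀ u ∈ A ∪ B, ∀ w ∈ A ∪ B, ¬ D u w)
    (hAout : ∀ u ∈ A, ∀ v ∈ A, ∀ w, D u w ↔ D v w)
    (hAin : ∀ u ∈ A, ∀ v ∈ A, ∀ w, D w u ↔ D w v)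
    (hBout : ∀ u ∈ B, ∀ v ∈ B, ∀ w, D u w ↔ D v w)
    (hBin : ∀ u ∈ B, ∀ v ∈ B, ∀ w, D w u ↔ D w v)
    (a : V) (ha : a ∈ A) (b : V) (hb : b ∈ B) :
    starCount k D ≤
      max
        (starCount k (fun u w =>
          D (if u ∈ B then a else u) (if w ∈ B then a else w)))
        (starCount k (fun u w =>
          D (if u ∈ A then b else u) (if w ∈ A then b else w))) := by
  change starCount k D ≤ max (starCount k (mergeInto D B a)) (starCount k (mergeInto D A b))
  have hA : IsTwinClass D A := fun u hu v hv w => ⟨hAout u hu v hv w, hAin u hu v hv w⟩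
  have hB : IsTwinClass D B := fun u hu v hv w => ⟨hBout u hu v hv w, hBin u hu v hv w⟩
  have hE : ((A ∪ B).toFinset : Set V) = A ∪ B := Set.coe_toFinset _
  have hmul := card_mul_starCount_le (k := k) hA hB hnoarc hdisj ha hb hE
  rw [card_eq_card_toFinset_add_card_toFinset hdisj hE] at hmul
  have hpos : 0 < #A.toFinset := card_pos.2 ⟨a, Set.mem_toFinset.2 ha⟩
  by_contra! hlt
  obtain ⟨hltA, hltB⟩ := max_lt_iff.1 hlt
  nlinarith

/-- Merging two equivalence classes with no arcs between them does not decrease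
the number of induced copies of `S⃗ₖ` for one of the two ways of merging. -/
theorem merge_classes {V : Type} [Fintype V] (k : ℕ) (hk : 3 ≤ k)
    (D : V → V → Prop) (hloop : ∀ v, ¬ D v v)
    (A B : Set V) (hdisj : Disjoint A B) (hA : A.Nonempty) (hB : B.Nonempty)
    (hnoarc : ∀ u ∈ A ∪ B, ∀ w ∈ A ∪ B, ¬ D u w)
    (hAout : ∀ u ∈ A, ∀ v ∈ A, ∀ w, D u w ↔ D v w)
    (hAin : ∀ u ∈ A, ∀ v ∈ A, ∀ w, D w u ↔ D w v)
    (hBout : ∀ u ∈ B, ∀ v ∈ B, ∀ w, D u w ↔ D v w)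
    (hBin : ∀ u ∈ B, ∀ v ∈ B, ∀ w, D w u ↔ D w v)
    (a : V) (ha : a ∈ A) (b : V) (hb : b ∈ B) :
    starCount k D ≤
      max
        (starCount k (fun u w =>
          D (if u ∈ B then a else u) (if w ∈ B then a else w)))
        (starCount k (fun u w =>
          D (if u ∈ A then b else u) (if w ∈ A then b else w))) :=
  merge_classes_general k D A B hdisj hnoarc hAout hAin hBout hBin a ha b hb
end

section
/- Let k ≥ 2 and m ≥ 2 be integers. For each m define F_m = sup { k·Σ_{1 ≤ i < j ≤ m} w_i^{k−1}·w_j : w_1, …, w_m ≥ 0, Σ_{i=1}^m w_i = 1 }. Then F_m = sup_{0 ≤ w ≤ 1} ( k·w^{k−1}·(1−w) + (1−w)^k·F_{m−1} ). -/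
noncomputable def fk (k m : ℕ) (w : Fin m → ℝ) : ℝ :=
  (k : ℝ) * ∑ i : Fin m, ∑ j : Fin m, if i < j then w i ^ (k - 1) * w j else 0

def Sk (k m : ℕ) : Set ℝ :=
  {r : ℝ | ∃ w : Fin m → ℝ, (∀ i, 0 ≤ w i) ∧ (∑ i, w i) = 1 ∧ r = fk k m w}

lemma fk_split (k n : ℕ) (w : Fin (n + 1) → ℝ) :
    fk k (n + 1) w =
      (k : ℝ) * w 0 ^ (k - 1) * (∑ j : Fin n, w j.succ) + fk k n (w ∘ Fin.succ) := by
  unfold fk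
  rw [Fin.sum_univ_succ]
  have h1 : ∑ j : Fin (n+1), (if (0 : Fin (n+1)) < j then w 0 ^ (k-1) * w j else 0)
      = w 0 ^ (k-1) * ∑ j : Fin n, w j.succ := by
    rw [Fin.sum_univ_succ]
    simp [Fin.succ_pos, Finset.mul_sum]
  have h2 : ∀ i : Fin n, ∑ j : Fin (n+1),
      (if i.succ < j then w i.succ ^ (k-1) * w j else 0)
      = ∑ j : Fin n, (if i < j then (w ∘ Fin.succ) i ^ (k-1) * (w ∘ Fin.succ) j else 0) := by
    intro i
    rw [Fin.sum_univ_succ]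
    simp [Fin.succ_lt_succ_iff, Fin.not_lt_zero]
  rw [h1, Finset.sum_congr rfl (fun i _ => h2 i)]
  ring

lemma fk_smul {k : ℕ} (hk : 1 ≤ k) (n : ℕ) (c : ℝ) (v : Fin n → ℝ) :
    fk k n (fun i => c * v i) = c ^ k * fk k n v := by
  have hck : c ^ (k - 1) * c = c ^ k := by
    rw [← pow_succ]; congr 1; omega
  have key : ∀ i j : Fin n, (if i < j then (c * v i) ^ (k-1) * (c * v j) else 0)
      = c ^ k * (if i < j then v i ^ (k-1) * v j else 0) := by
    intro i j
    split_ifs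
    · rw [mul_pow]
      calc c ^ (k-1) * v i ^ (k-1) * (c * v j) = (c ^ (k-1) * c) * (v i ^ (k-1) * v j) := by ring
        _ = _ := by rw [hck]
    · ring
  unfold fk
  simp only [key, ← Finset.mul_sum]
  ring

lemma Sk_nonempty (k m : ℕ) (hm : 1 ≤ m) : (Sk k m).Nonempty := by
  have hpos : 0 < m := hm
  set w : Fin m → ℝ := fun i => if i = ⟨0, hpos⟩ then 1 else 0 with hw
  refine ⟨fk k m w, w, ?_, ?_, rfl⟩
  · intro i; simp only [hw]; split_ifs <;> norm_num
  · simp [hw]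

lemma Sk_bdd (k m : ℕ) : BddAbove (Sk k m) := by
  refine ⟨(k : ℝ) * (m * m), ?_⟩
  rintro r ⟨w, hw0, hw1, rfl⟩
  have hle1 : ∀ i, w i ≤ 1 := by
    intro i
    rw [← hw1]
    exact Finset.single_le_sum (fun j _ => hw0 j) (Finset.mem_univ i)
  unfold fk
  have : ∑ i : Fin m, ∑ j : Fin m, (if i < j then w i ^ (k-1) * w j else 0)
      ≤ ∑ i : Fin m, ∑ j : Fin m, (1 : ℝ) := by
    apply Finset.sum_le_sum; intro i _
    apply Finset.sum_le_sum; intro j _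
    split_ifs
    · have := pow_le_one₀ (hw0 i) (hle1 i) (n := k - 1)
      calc w i ^ (k-1) * w j ≤ 1 * 1 := mul_le_mul this (hle1 j) (hw0 j) zero_le_one
        _ = 1 := by ring
    · norm_num
  simp only [Finset.sum_const, Finset.card_univ, Fintype.card_fin, nsmul_eq_mul] at this
  have hk0 : (0:ℝ) ≤ k := Nat.cast_nonneg k
  --
  calc (k:ℝ) * ∑ i : Fin m, ∑ j : Fin m, (if i < j then w i ^ (k-1) * w j else 0)
      ≤ (k:ℝ) * ((m:ℝ) * m) := by
        apply mul_le_mul_of_nonneg_left _ hk0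
        nlinarith [this]

lemma fk_zero (k n : ℕ) (hk : 1 ≤ k) : fk k n (fun _ => (0:ℝ)) = 0 := by
  unfold fk
  have : (0:ℝ) ^ (k-1) * 0 = 0 := by ring
  simp [this]

lemma fk_le {k : ℕ} (hk : 2 ≤ k) {n : ℕ} (hn : 1 ≤ n) (v : Fin n → ℝ) (hv : ∀ i, 0 ≤ v i) :
    fk k n v ≤ (∑ i, v i) ^ k * sSup (Sk k n) := by
  set c := ∑ i, v i with hc
  have hc0 : 0 ≤ c := Finset.sum_nonneg fun i _ => hv i
  rcases eq_or_lt_of_le hc0 with h0 | h0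
  · have hsum0 : ∑ i, v i = 0 := by rw [← hc, ← h0]
    have hv0 : ∀ i ∈ Finset.univ, v i = 0 :=
      (Finset.sum_eq_zero_iff_of_nonneg (fun i _ => hv i)).mp hsum0
    have hvz : v = fun _ => (0:ℝ) := funext fun i => hv0 i (Finset.mem_univ i)
    rw [hvz, fk_zero k n (by omega), ← h0, zero_pow (by omega : k ≠ 0)]
    norm_num
  · set u : Fin n → ℝ := fun i => c⁻¹ * v i with hu
    have hu0 : ∀ i, 0 ≤ u i := fun i => mul_nonneg (inv_nonneg.mpr hc0) (hv i)
    have hu1 : ∑ i, u i = 1 := by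
      rw [hu]; rw [← Finset.mul_sum, ← hc, inv_mul_cancel₀ (ne_of_gt h0)]
    have hmem : fk k n u ∈ Sk k n := ⟨u, hu0, hu1, rfl⟩
    have hle : fk k n u ≤ sSup (Sk k n) := le_csSup (Sk_bdd k n) hmem
    have hveq : v = fun i => c * u i := by
      funext i; rw [hu]; field_simp
    calc fk k n v = c ^ k * fk k n u := by rw [hveq, fk_smul (by omega) n c u]
      _ ≤ c ^ k * sSup (Sk k n) := mul_le_mul_of_nonneg_left hle (pow_nonneg hc0 k)

/-- `F_m = sup { k·Σ_{i<j} w_i^{k−1}·w_j : w ≥ 0, Σ w_i = 1 }`. -/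
noncomputable def Fm (k m : ℕ) : ℝ :=
  sSup {r : ℝ | ∃ w : Fin m → ℝ, (∀ i, 0 ≤ w i) ∧ (∑ i, w i) = 1 ∧
    r = (k : ℝ) * ∑ i : Fin m, ∑ j : Fin m,
          if i < j then w i ^ (k - 1) * w j else 0}

/-- The recursion `F_m = sup_{0 ≤ w ≤ 1} ( k·w^{k−1}·(1−w) + (1−w)^k·F_{m−1} )`,
coming from homogeneity of the constrained maximum. -/
theorem Fm_recursion (k m : ℕ) (hk : 2 ≤ k) (hm : 2 ≤ m) :
    Fm k m =
      sSup ((fun w : ℝ => (k : ℝ) * w ^ (k - 1) * (1 - w) + (1 - w) ^ k * Fm k (m - 1)) ''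
        Set.Icc 0 1) := by
  obtain ⟨n, rfl⟩ : ∃ n, m = n + 1 := ⟨m - 1, by omega⟩
  have hn : 1 ≤ n := by omega
  have e : ∀ m', Fm k m' = sSup (Sk k m') := fun _ => rfl
  simp only [Nat.add_sub_cancel, e]
  set F := sSup (Sk k n) with hF
  set g : ℝ → ℝ := fun t => (k : ℝ) * t ^ (k - 1) * (1 - t) + (1 - t) ^ k * F with hg
  have hbddR : BddAbove (g '' Set.Icc 0 1) := by
    refine ⟨(k : ℝ) + |F|, ?_⟩
    rintro y ⟨t, ⟨ht0, ht1⟩, rfl⟩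
    have p1 : t ^ (k - 1) ≤ 1 := pow_le_one₀ ht0 ht1
    have p1' : 0 ≤ t ^ (k - 1) := pow_nonneg ht0 _
    have p2 : (1 - t) ^ k ≤ 1 := pow_le_one₀ (by linarith) (by linarith)
    have p3 : 0 ≤ (1 - t) ^ k := pow_nonneg (by linarith) _
    have p4 : F ≤ |F| := le_abs_self F
    have p5 : (0:ℝ) ≤ |F| := abs_nonneg F
    have hk0 : (0:ℝ) ≤ k := Nat.cast_nonneg k
    have r0 : 0 ≤ t ^ (k - 1) * (1 - t) := mul_nonneg p1' (by linarith)
    have r1 : t ^ (k - 1) * (1 - t) ≤ 1 := by nlinarith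
    have q1 : (k : ℝ) * t ^ (k - 1) * (1 - t) ≤ (k : ℝ) := by
      calc (k:ℝ) * t ^ (k-1) * (1-t) = (k:ℝ) * (t ^ (k-1) * (1-t)) := by ring
        _ ≤ (k:ℝ) * 1 := mul_le_mul_of_nonneg_left r1 hk0
        _ = (k:ℝ) := by ring
    have q2 : (1 - t) ^ k * F ≤ |F| := by nlinarith
    simp only [hg]; linarith
  apply le_antisymm
  · apply csSup_le (Sk_nonempty k (n + 1) (by omega))
    rintro r ⟨w, hw0, hw1, rfl⟩
    set t := w 0 with hts
    have ht0 : 0 ≤ t := hw0 0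
    have htail0 : 0 ≤ ∑ j : Fin n, w j.succ :=
      Finset.sum_nonneg fun j _ => hw0 j.succ
    have htail : ∑ j : Fin n, w j.succ = 1 - t := by
      rw [Fin.sum_univ_succ] at hw1; linarith
    have ht1 : t ≤ 1 := by linarith
    have hle : fk k n (w ∘ Fin.succ) ≤ (1 - t) ^ k * F := by
      have := fk_le hk hn (w ∘ Fin.succ) (fun i => hw0 i.succ)
      have hs : ∑ i, (w ∘ Fin.succ) i = 1 - t := htail
      rwa [hs] at this
    have : fk k (n + 1) w ≤ g t := by
      rw [fk_split, htail]
      simp only [hg]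
      have hpk : (0:ℝ) ≤ (k : ℝ) * t ^ (k-1) := by positivity
      linarith
    exact le_trans this (le_csSup hbddR ⟨t, ⟨ht0, ht1⟩, rfl⟩)
  · apply csSup_le ((Set.nonempty_Icc.mpr zero_le_one).image g)
    rintro y ⟨t, ⟨ht0, ht1⟩, rfl⟩
    set a := (k : ℝ) * t ^ (k - 1) * (1 - t) with ha
    set b := (1 - t) ^ k with hb
    set M := sSup (Sk k (n + 1)) with hM
    have step : ∀ s ∈ Sk k n, a + b * s ≤ M := by
      rintro s ⟨v, hv0, hv1, rfl⟩
      apply le_csSup (Sk_bdd k (n + 1))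
      refine ⟨Fin.cons t (fun i => (1 - t) * v i), ?_, ?_, ?_⟩
      · intro i
        refine Fin.cases ?_ ?_ i
        · simpa using ht0
        · intro j; simp only [Fin.cons_succ]
          exact mul_nonneg (by linarith) (hv0 j)
      · rw [Fin.sum_univ_succ]
        simp only [Fin.cons_zero, Fin.cons_succ, ← Finset.mul_sum, hv1]
        ring
      · show a + b * fk k n v = fk k (n + 1) _
        rw [fk_split]
        have h1 : (Fin.cons t (fun i => (1 - t) * v i) : Fin (n+1) → ℝ) 0 = t := rfl
        have h2 : (Fin.cons t (fun i => (1 - t) * v i) : Fin (n+1) → ℝ) ∘ Fin.succ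
            = fun i => (1 - t) * v i := by
          funext j; simp [Fin.cons_succ]
        have h3 : ∑ j : Fin n, (Fin.cons t (fun i => (1 - t) * v i) : Fin (n+1) → ℝ) j.succ
            = 1 - t := by
          simp only [Fin.cons_succ, ← Finset.mul_sum, hv1]; ring
        rw [h1, h2, h3, fk_smul (by omega) n (1 - t) v]
    have hb0 : 0 ≤ b := pow_nonneg (by linarith) k
    show a + b * F ≤ M
    rcases eq_or_lt_of_le hb0 with hbz | hbz
    · obtain ⟨s, hs⟩ := Sk_nonempty k n hn
      have h := step s hs
      calc a + b * F = a + b * s := by rw [← hbz]; ring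
        _ ≤ M := h
    · have hFle : F ≤ (M - a) / b := by
        apply csSup_le (Sk_nonempty k n hn)
        intro s hs
        rw [le_div_iff₀ hbz]
        have := step s hs
        linarith [mul_comm s b]
      have h2 : F * b ≤ M - a := (le_div_iff₀ hbz).mp hFle
      nlinarith [h2]
end

section
/- Let k ≥ 3 be an integer and for each integer m ≥ 1 define F_m = sup { k·Σ_{1 ≤ i < j ≤ m} w_i^{k−1}·w_j : w_1, …, w_m ≥ 0, Σ_{i=1}^m w_i = 1 }. Then the sequence (F_m) is nondecreasing, bounded above by 1, and converges to sup_{x ∈ (0,1]} k·x^{k−1}·(1−x)/(1−(1−x)^k). -/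
open Finset Filter Topology

/-- The paper's `f_m`. -/
def objective (k : ℕ) {m : ℕ} (w : Fin m → ℝ) : ℝ :=
  (k : ℝ) * ∑ i, ∑ j, if i < j then w i ^ (k - 1) * w j else 0

/-- The value of `objective k` at the infinite geometric weights `x (1 - x) ^ i`. -/
noncomputable def geomValue (k : ℕ) (x : ℝ) : ℝ :=
  (k : ℝ) * x ^ (k - 1) * (1 - x) / (1 - (1 - x) ^ k)

/-- The weights `x, x (1 - x), …, x (1 - x) ^ (m - 1), (1 - x) ^ m`. -/
noncomputable def geomWeights (x : ℝ) : (m : ℕ) → Fin (m + 1) → ℝ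
  | 0 => fun _ => 1
  | m + 1 => Fin.cons x ((1 - x) • geomWeights x m)

section

variable {k m : ℕ}

lemma objective_cons (a : ℝ) (w : Fin m → ℝ) :
    objective k (Fin.cons a w : Fin (m + 1) → ℝ) =
      k * a ^ (k - 1) * ∑ j, w j + objective k w := by
  simp [objective, Fin.sum_univ_succ, Fin.succ_lt_succ_iff, mul_sum, mul_add, mul_assoc]

lemma objective_cons_zero (hk : 2 ≤ k) (w : Fin m → ℝ) :
    objective k (Fin.cons 0 w : Fin (m + 1) → ℝ) = objective k w := by
  simp [objective_cons, zero_pow (by omega : k - 1 ≠ 0)]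

lemma objective_smul (c : ℝ) (w : Fin m → ℝ) :
    objective k (c • w) = c ^ k * objective k w := by
  rcases eq_or_ne k 0 with rfl | hk
  · simp [objective]
  simp only [objective, mul_sum, Pi.smul_apply, smul_eq_mul]
  refine sum_congr rfl fun i _ => sum_congr rfl fun j _ => ?_
  split_ifs
  · rw [mul_pow, ← pow_sub_one_mul hk c]; ring
  · simp

lemma mul_pow_sub_one_mul_add_pow_le_add_pow (hk : 2 ≤ k) {a b : ℝ} (ha : 0 ≤ a)
    (hb : 0 ≤ b) :
    k * a ^ (k - 1) * b + b ^ k ≤ (a + b) ^ k := by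
  have hsub : ({k - 1, 0} : Finset ℕ) ⊆ range (k + 1) := by
    intro i hi
    rcases Finset.mem_insert.1 hi with rfl | hi <;> simp_all
  have := sum_le_sum_of_subset_of_nonneg hsub
    (f := fun i => a ^ i * b ^ (k - i) * (k.choose i : ℝ)) fun i _ _ => by positivity
  rw [sum_pair (by omega), Nat.choose_symm_of_eq_add (show k = k - 1 + 1 by omega),
    Nat.choose_one_right, Nat.sub_sub_self (by omega), ← add_pow] at this
  simpa [mul_comm, mul_left_comm, mul_assoc] using this

lemma objective_le_mul_sum_pow (hk : k ≠ 0) {L : ℝ}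
    (hL : ∀ a b : ℝ, 0 ≤ a → 0 ≤ b →
      k * a ^ (k - 1) * b + L * b ^ k ≤ L * (a + b) ^ k) :
    ∀ {m : ℕ} (w : Fin m → ℝ), (∀ i, 0 ≤ w i) → objective k w ≤ L * (∑ i, w i) ^ k
  | 0, w, _ => by simp [objective, zero_pow hk]
  | m + 1, w, hw => by
    have ih := objective_le_mul_sum_pow hk hL (Fin.tail w) fun i => hw _
    have step := hL (w 0) (∑ i, Fin.tail w i) (hw 0) (sum_nonneg fun i _ => hw _)
    rw [← Fin.cons_self_tail w, objective_cons, Fin.sum_cons]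
    linarith

lemma one_sub_one_sub_pow_pos (hk : k ≠ 0) {x : ℝ} (hx : x ∈ Set.Ioc 0 1) :
    0 < 1 - (1 - x) ^ k := by
  have := pow_lt_one₀ (by linarith [hx.2]) (by linarith [hx.1]) hk (a := 1 - x)
  linarith

lemma geomValue_le_one (hk : 2 ≤ k) {x : ℝ} (hx : x ∈ Set.Ioc 0 1) : geomValue k x ≤ 1 := by
  rw [geomValue, div_le_one (one_sub_one_sub_pow_pos (by omega) hx)]
  have := mul_pow_sub_one_mul_add_pow_le_add_pow hk hx.1.le (sub_nonneg.2 hx.2)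
  rw [add_sub_cancel, one_pow] at this
  linarith

lemma bddAbove_geomValue_image (hk : 2 ≤ k) : BddAbove (geomValue k '' Set.Ioc 0 1) :=
  ⟨1, by rintro _ ⟨x, hx, rfl⟩; exact geomValue_le_one hk hx⟩

lemma mul_pow_sub_one_mul_add_mul_pow_le_of_geomValue_le (hk : 2 ≤ k) {L : ℝ}
    (hL : ∀ x ∈ Set.Ioc (0 : ℝ) 1, geomValue k x ≤ L) {a b : ℝ} (ha : 0 ≤ a)
    (hb : 0 ≤ b) :
    k * a ^ (k - 1) * b + L * b ^ k ≤ L * (a + b) ^ k := by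
  rcases ha.eq_or_lt with rfl | ha
  · simp [zero_pow (by omega : k - 1 ≠ 0)]
  obtain ⟨s, hs_def⟩ : ∃ s, s = a + b := ⟨_, rfl⟩
  have hs : 0 < s := by rw [hs_def]; positivity
  obtain ⟨x, hx_def⟩ : ∃ x, x = a / s := ⟨_, rfl⟩
  have hx : x ∈ Set.Ioc 0 1 := by
    rw [hx_def]; exact ⟨div_pos ha hs, (div_le_one hs).2 (by linarith)⟩
  have hxs : a = x * s := by rw [hx_def, div_mul_cancel₀ _ hs.ne']
  have hb : b = (1 - x) * s := by linear_combination -hs_def - hxs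
  have hgx := hL x hx
  rw [geomValue, div_le_iff₀ (one_sub_one_sub_pow_pos (by omega) hx)] at hgx
  rw [← hs_def, hxs, hb]
  calc k * (x * s) ^ (k - 1) * ((1 - x) * s) + L * ((1 - x) * s) ^ k
      = s ^ k * (k * x ^ (k - 1) * (1 - x)) + L * (1 - x) ^ k * s ^ k := by
        rw [mul_pow, mul_pow]
        linear_combination (k * x ^ (k - 1) * (1 - x)) * pow_sub_one_mul (by omega : k ≠ 0) s
    _ ≤ s ^ k * (L * (1 - (1 - x) ^ k)) + L * (1 - x) ^ k * s ^ k := by gcongr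
    _ = L * s ^ k := by ring

lemma geomWeights_nonneg {x : ℝ} (hx0 : 0 ≤ x) (hx1 : x ≤ 1) :
    ∀ m i, 0 ≤ geomWeights x m i
  | 0, _ => zero_le_one
  | m + 1, i => by
    refine Fin.cases ?_ (fun i => ?_) i
    · simpa [geomWeights] using hx0
    · simpa [geomWeights] using mul_nonneg (sub_nonneg.2 hx1) (geomWeights_nonneg hx0 hx1 m i)

lemma sum_geomWeights (x : ℝ) : ∀ m, ∑ i, geomWeights x m i = 1
  | 0 => by simp [geomWeights]
  | m + 1 => by simp [geomWeights, Fin.sum_cons, ← mul_sum, sum_geomWeights x m]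

lemma objective_geomWeights (hk : k ≠ 0) {x : ℝ} (hx : x ∈ Set.Ioc 0 1) :
    ∀ m, objective k (geomWeights x m) = geomValue k x * (1 - ((1 - x) ^ k) ^ m)
  | 0 => by simp [objective, geomWeights]
  | m + 1 => by
    have hd := (one_sub_one_sub_pow_pos hk hx).ne'
    rw [geomWeights, objective_cons, objective_smul, objective_geomWeights hk hx m, geomValue]
    simp only [Pi.smul_apply, smul_eq_mul, ← mul_sum, sum_geomWeights]
    field_simp
    ring

lemma objective_le_of_mem_stdSimplex (hk : k ≠ 0) {L : ℝ}
    (hL : ∀ a b : ℝ, 0 ≤ a → 0 ≤ b →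
      k * a ^ (k - 1) * b + L * b ^ k ≤ L * (a + b) ^ k)
    {w : Fin m → ℝ} (hw : w ∈ stdSimplex ℝ (Fin m)) : objective k w ≤ L := by
  simpa [hw.2] using objective_le_mul_sum_pow hk hL w hw.1

lemma objective_le_one (hk : 2 ≤ k) {w : Fin m → ℝ} (hw : w ∈ stdSimplex ℝ (Fin m)) :
    objective k w ≤ 1 :=
  objective_le_of_mem_stdSimplex (by omega)
    (fun _ _ ha hb => by simpa using mul_pow_sub_one_mul_add_pow_le_add_pow hk ha hb) hw

lemma Fm_eq_sSup_image (k m : ℕ) : Fm k m = sSup (objective k '' stdSimplex ℝ (Fin m)) := by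
  unfold Fm
  congr 1
  ext r
  constructor
  · rintro ⟨w, hw, hs, rfl⟩; exact ⟨w, ⟨hw, hs⟩, rfl⟩
  · rintro ⟨w, ⟨hw, hs⟩, rfl⟩; exact ⟨w, hw, hs, rfl⟩

lemma objective_le_Fm (hk : 2 ≤ k) {w : Fin m → ℝ} (hw : w ∈ stdSimplex ℝ (Fin m)) :
    objective k w ≤ Fm k m := by
  rw [Fm_eq_sSup_image]
  exact le_csSup ⟨1, by rintro _ ⟨v, hv, rfl⟩; exact objective_le_one hk hv⟩
    ⟨w, hw, rfl⟩

lemma Fm_succ_le {L : ℝ} (h : ∀ w ∈ stdSimplex ℝ (Fin (m + 1)), objective k w ≤ L) :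
    Fm k (m + 1) ≤ L := by
  rw [Fm_eq_sSup_image]
  refine csSup_le ((Set.nonempty_of_mem (single_mem_stdSimplex ℝ (0 : Fin (m + 1)))).image _) ?_
  rintro _ ⟨w, hw, rfl⟩
  exact h w hw

lemma Fm_succ_le_one (hk : 2 ≤ k) : Fm k (m + 1) ≤ 1 :=
  Fm_succ_le fun _ => objective_le_one hk

lemma monotone_Fm_succ (hk : 2 ≤ k) : Monotone fun m => Fm k (m + 1) := by
  refine monotone_nat_of_le_succ fun m => Fm_succ_le fun w hw => ?_
  rw [← objective_cons_zero hk]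
  refine objective_le_Fm hk ⟨fun i => Fin.cases le_rfl hw.1 i, ?_⟩
  simpa [Fin.sum_cons] using hw.2

lemma bddAbove_range_Fm_succ (hk : 2 ≤ k) : BddAbove (Set.range fun m => Fm k (m + 1)) :=
  ⟨1, by rintro _ ⟨m, rfl⟩; exact Fm_succ_le_one hk⟩

lemma iSup_Fm_succ (hk : 2 ≤ k) : ⨆ m, Fm k (m + 1) = sSup (geomValue k '' Set.Ioc 0 1) := by
  have hL : ∀ x ∈ Set.Ioc (0 : ℝ) 1, geomValue k x ≤ sSup (geomValue k '' Set.Ioc 0 1) :=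
    fun x hx => le_csSup (bddAbove_geomValue_image hk) ⟨x, hx, rfl⟩
  refine le_antisymm (ciSup_le fun m => Fm_succ_le fun w => objective_le_of_mem_stdSimplex
    (by omega) (fun _ _ => mul_pow_sub_one_mul_add_mul_pow_le_of_geomValue_le hk hL)) ?_
  refine csSup_le ⟨_, 1, ⟨one_pos, le_rfl⟩, rfl⟩ ?_
  rintro _ ⟨x, hx, rfl⟩
  have hq0 : 0 ≤ (1 - x) ^ k := pow_nonneg (sub_nonneg.2 hx.2) k
  have hq1 : (1 - x) ^ k < 1 := by linarith [one_sub_one_sub_pow_pos (k := k) (by omega) hx]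
  have hlim : Tendsto (fun m => geomValue k x * (1 - ((1 - x) ^ k) ^ m)) atTop
      (𝓝 (geomValue k x)) := by
    simpa using ((tendsto_pow_atTop_nhds_zero_of_lt_one hq0 hq1).const_sub 1).const_mul
      (geomValue k x)
  refine le_of_tendsto' hlim fun m => ?_
  rw [← objective_geomWeights (by omega) hx]
  refine (objective_le_Fm hk ⟨geomWeights_nonneg hx.1.le hx.2 m, sum_geomWeights x m⟩).trans ?_
  exact le_ciSup (bddAbove_range_Fm_succ hk) m

end

/-- `(F_m)` is nondecreasing, bounded above by `1`, and converges to
`sup_{x ∈ (0,1]} k·x^{k−1}·(1−x)/(1−(1−x)^k)`. -/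
theorem Fm_limit (k : ℕ) (hk : 3 ≤ k) :
    (∀ m : ℕ, 1 ≤ m → Fm k m ≤ Fm k (m + 1)) ∧
    (∀ m : ℕ, 1 ≤ m → Fm k m ≤ 1) ∧
    Filter.Tendsto (fun m : ℕ => Fm k m) Filter.atTop
      (nhds (sSup ((fun x : ℝ => (k : ℝ) * x ^ (k - 1) * (1 - x) / (1 - (1 - x) ^ k)) ''
        Set.Ioc 0 1))) := by
  have hk2 : 2 ≤ k := by omega
  refine ⟨fun m hm => ?_, fun m hm => ?_, ?_⟩
  · obtain ⟨n, rfl⟩ := Nat.exists_eq_add_of_le' hm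
    exact monotone_Fm_succ hk2 n.le_succ
  · obtain ⟨n, rfl⟩ := Nat.exists_eq_add_of_le' hm
    exact Fm_succ_le_one hk2
  · have h := tendsto_atTop_ciSup (monotone_Fm_succ hk2) (bddAbove_range_Fm_succ hk2)
    rw [iSup_Fm_succ hk2] at h
    exact (tendsto_add_atTop_iff_nat 1).1 h
end

section
/- Let k ≥ 3 be an integer, let T be a tournament on {1,…,m} (for every i ≠ j exactly one of the arcs i→j, j→i is present, and there are no loops), and let D be the blow-up of T: the vertex set of D is partitioned into classes V_1, …, V_m with |V_i| = n_i, there are no arcs inside any class, and for i ≠ j every arc from every vertex of V_i to every vertex of V_j is present if and only if T has the arc i→j (and no arcs from V_j to V_i in that case). Then the number of k-subsets of the vertices of D inducing a copy of the directed star S⃗_k equals Σ_{(i,j) : T has arc i→j} n_i · C(n_j, k−1). -/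
open scoped Classical

/-!
A star has a unique centre, so the stars are counted centre by centre. In the blow-up, a set
`insert v A` is a star centred at `v` exactly when `A` lies inside a single class `V_j` with
`T (c v) j`: vertices of different classes are always joined by an arc, and since `T` is a
tournament there are no arcs back into `v`. Hence a vertex of class `i` is the centre of
`∑_{T i j} C(n_j, k-1)` stars, and summing over the `n_i` vertices of each class gives the formula.
-/

open Finset

section Star

variable {V : Type} {D : V → V → Prop}

variable (D) in
def IsStarCenter (S : Finset V) (v : V) : Prop :=
  v ∈ S ∧ ∀ u ∈ S, ∀ w ∈ S, (D u w ↔ (u = v ∧ w ≠ v))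

theorem IsStarCenter.unique {S : Finset V} {v v' : V} (h : IsStarCenter D S v)
    (h' : IsStarCenter D S v') : v = v' := by
  by_contra hne
  have hvv' : D v v' := (h.2 v h.1 v' h'.1).mpr ⟨rfl, fun e => hne e.symm⟩
  exact hne ((h'.2 v h.1 v' h'.1).mp hvv').1

theorem starCount_eq_sum_card_isStarCenter [Fintype V] (k : ℕ) (D : V → V → Prop) :
    starCount k D = ∑ v, #{S ∈ powersetCard k univ | IsStarCenter D S v} := by
  have hstars : {S : Finset V | S.card = k ∧
      ∃ v ∈ S, ∀ u ∈ S, ∀ w ∈ S, (D u w ↔ (u = v ∧ w ≠ v))} =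
      ↑(univ.biUnion fun v => {S ∈ powersetCard k univ | IsStarCenter D S v}) := by
    ext S
    simp only [Set.mem_ofPred_eq, coe_biUnion, coe_filter, mem_powersetCard, subset_univ,
      true_and, Set.mem_iUnion, mem_coe]
    exact ⟨fun ⟨hk, v, hv⟩ => ⟨v, mem_univ v, hk, hv⟩, fun ⟨v, _, hk, hv⟩ => ⟨hk, v, hv⟩⟩
  rw [starCount, hstars, Set.ncard_coe_finset, card_biUnion]
  intro v _ v' _ hne
  simp only [disjoint_left, mem_filter]
  exact fun S hS hS' => hne (hS.2.unique hS'.2)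

end Star

section Blowup

variable {ι V : Type} {T : ι → ι → Prop} {c : V → ι}

variable (T c) in
def blowup (u w : V) : Prop :=
  c u ≠ c w ∧ T (c u) (c w)

theorem isStarCenter_blowup_insert_iff (hT_irrefl : ∀ i, ¬ T i i)
    (hT_total : ∀ i j, i ≠ j → (T i j ↔ ¬ T j i)) {v : V} {A : Finset V}
    (hvA : v ∉ A) (hA : A.Nonempty) :
    IsStarCenter (blowup T c) (insert v A) v ↔ ∃ j, T (c v) j ∧ ∀ a ∈ A, c a = j := by
  constructor
  · rintro ⟨-, hstar⟩
    have hout : ∀ a ∈ A, T (c v) (c a) := fun a ha =>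
      ((hstar v (mem_insert_self v A) a (mem_insert_of_mem ha)).mpr
        ⟨rfl, ne_of_mem_of_not_mem ha hvA⟩).2
    obtain ⟨a₀, ha₀⟩ := hA
    refine ⟨c a₀, hout a₀ ha₀, fun a ha => ?_⟩
    by_contra hne
    have hno_arc : ∀ x ∈ A, ∀ y ∈ A, ¬ blowup T c x y := fun x hx y hy hxy =>
      hvA (((hstar x (mem_insert_of_mem hx) y (mem_insert_of_mem hy)).mp hxy).1 ▸ hx)
    by_cases h : T (c a) (c a₀)
    · exact hno_arc a ha a₀ ha₀ ⟨hne, h⟩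
    · exact hno_arc a₀ ha₀ a ha ⟨Ne.symm hne, (hT_total _ _ (Ne.symm hne)).mpr h⟩
  · rintro ⟨j, hvj, hAj⟩
    have hcv : c v ≠ j := fun h => hT_irrefl j (h ▸ hvj)
    have hback : ¬ T j (c v) := (hT_total _ _ hcv).mp hvj
    refine ⟨mem_insert_self v A, fun u hu w hw => ?_⟩
    rcases mem_insert.mp hu with rfl | huA <;> rcases mem_insert.mp hw with rfl | hwA
    · simp [blowup]
    · simp [blowup, hAj w hwA, hcv, hvj, ne_of_mem_of_not_mem hwA hvA]
    · simp [blowup, hAj u huA, hback, ne_of_mem_of_not_mem huA hvA]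
    · simp [blowup, hAj u huA, hAj w hwA, ne_of_mem_of_not_mem huA hvA]

theorem card_isStarCenter_blowup [Fintype ι] [DecidableEq ι] [Fintype V]
    (hT_irrefl : ∀ i, ¬ T i i) (hT_total : ∀ i j, i ≠ j → (T i j ↔ ¬ T j i))
    {k : ℕ} (hk : 2 ≤ k) (v : V) :
    #{S ∈ powersetCard k univ | IsStarCenter (blowup T c) S v} =
      ∑ j, if T (c v) j then (#{u | c u = j}).choose (k - 1) else 0 := by
  set B := ({j | T (c v) j} : Finset ι).biUnion fun j => powersetCard (k - 1) {u | c u = j}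
  have hB : ∀ A, A ∈ B ↔ #A = k - 1 ∧ ∃ j, T (c v) j ∧ ∀ a ∈ A, c a = j := by
    intro A
    simp only [B, mem_biUnion, mem_filter, mem_univ, true_and, mem_powersetCard, subset_iff]
    tauto
  have hvB : ∀ A ∈ B, v ∉ A := fun A hA hv => by
    obtain ⟨-, j, hvj, hAj⟩ := (hB A).mp hA
    exact hT_irrefl j (hAj v hv ▸ hvj)
  have hcardB : #B = ∑ j, if T (c v) j then (#{u | c u = j}).choose (k - 1) else 0 := by
    rw [card_biUnion, ← sum_filter]
    · simp only [card_powersetCard]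
    intro j _ j' _ hjj'
    refine disjoint_left.mpr fun A hA hA' => hjj' ?_
    rw [mem_powersetCard] at hA hA'
    obtain ⟨a, ha⟩ := card_pos.mp (hA.2 ▸ (by omega : 0 < k - 1))
    exact (mem_filter.mp (hA.1 ha)).2.symm.trans (mem_filter.mp (hA'.1 ha)).2
  rw [← hcardB]
  refine card_nbij' (fun S => S.erase v) (fun A => insert v A) ?_ ?_ ?_ ?_
  · intro S hS
    rw [mem_coe, mem_filter, mem_powersetCard] at hS
    obtain ⟨⟨-, hcard⟩, hstar⟩ := hS
    have hcard_erase : #(S.erase v) = k - 1 := by rw [card_erase_of_mem hstar.1, hcard]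
    rw [mem_coe, hB, ← isStarCenter_blowup_insert_iff hT_irrefl hT_total (notMem_erase v S)
      (card_pos.mp (by omega)), insert_erase hstar.1]
    exact ⟨hcard_erase, hstar⟩
  · intro A hA
    have hvA := hvB A hA
    obtain ⟨hcard, hclass⟩ := (hB A).mp hA
    rw [mem_coe, mem_filter, mem_powersetCard, card_insert_of_notMem hvA, hcard,
      isStarCenter_blowup_insert_iff hT_irrefl hT_total hvA (card_pos.mp (by omega))]
    exact ⟨⟨subset_univ _, by omega⟩, hclass⟩
  · intro S hS
    exact insert_erase (mem_filter.mp hS).2.1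
  · intro A hA
    exact erase_insert (hvB A hA)

end Blowup

/-- In the blow-up of a tournament `T` with class sizes `nn i`, the number of
induced copies of `S⃗ₖ` equals `Σ_{T i j} nn i · C(nn j, k−1)`. -/
theorem starCount_tournament_blowup {V : Type} [Fintype V] (k m : ℕ) (hk : 3 ≤ k)
    (T : Fin m → Fin m → Prop)
    (hT_irrefl : ∀ i, ¬ T i i)
    (hT_total : ∀ i j : Fin m, i ≠ j → (T i j ↔ ¬ T j i))
    (c : V → Fin m) (nn : Fin m → ℕ)
    (hsize : ∀ i, (Finset.univ.filter fun v => c v = i).card = nn i) :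
    starCount k (fun u w => c u ≠ c w ∧ T (c u) (c w)) =
      ∑ i : Fin m, ∑ j : Fin m,
        if T i j then nn i * (nn j).choose (k - 1) else 0 := by
  set starsAt : Fin m → ℕ := fun i => ∑ j, if T i j then (nn j).choose (k - 1) else 0
  calc starCount k (blowup T c)
      = ∑ v, starsAt (c v) := by
        rw [starCount_eq_sum_card_isStarCenter]
        simp only [card_isStarCenter_blowup hT_irrefl hT_total (by omega : 2 ≤ k), hsize, starsAt]
    _ = ∑ i, nn i * starsAt i := by
        rw [← sum_fiberwise' univ c starsAt]
        simp only [sum_const, hsize, smul_eq_mul]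
    _ = _ := by simp only [starsAt, mul_sum, mul_ite, mul_zero]
end

section
/- For all integers 2 ≤ s ≤ t and every ε > 0, there exists N such that for every n ≥ N and every digraph D on n vertices, the number of (s+t)-element vertex subsets of D inducing a copy of the complete bipartite digraph K⃗_{s,t} is at most ( C(s+t,s)·(s/(s+t))^s·(t/(s+t))^t + ε )·C(n, s+t). -/
/-!
An induced copy of `K⃗_{s,t}` on `S` is an ordered pair `(A, S \ A)` of independent sets with
every arc between them a one-way arc `A → S \ A`. Such a pair through a one-way arc `u → w` is
determined by choosing `s - 1` of the `X` vertices non-adjacent to `u` with a one-way arc to `w`,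
and `t - 1` of the `Y` vertices with a one-way arc from `u` and non-adjacent to `w`; hence
`s! t! · #copies ≤ ∑_{u → w} X ^ (s - 1) * Y ^ (t - 1)`. Let `x, y, z` count, at each vertex,
the non-neighbours and the one-way out- and in-neighbours, so `x + y + z ≤ n`. Bounding `X` by
`x u` and `z w`, `Y` by `x w`, splitting `s - 1 = e₁ + e₂` with `e₁ = s² / ((s + t) t)` and
applying Hölder with exponents `(s + t) / s`, `(s + t) / t` leaves two sums over vertices. A
pointwise two-term estimate and weighted AM-GM bound their product by
`(s / (s + t)) ^ s (t / (s + t)) ^ t n ^ (s + t)`, and `n ^ k / k! ∼ C(n, k)` finishes the proof.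
-/

/-- The number of `(s+t)`-element vertex subsets of the digraph `D` inducing a
copy of the complete bipartite digraph `K⃗_{s,t}`: there is an `s`-element
subset `A ⊆ S` such that `D` has an arc `u → w` (for `u, w ∈ S`) iff
`u ∈ A` and `w ∉ A`. -/
noncomputable def kstCount (s t : ℕ) {V : Type} [Fintype V] (D : V → V → Prop) : ℕ :=
  {S : Finset V | S.card = s + t ∧
    ∃ A ⊆ S, A.card = s ∧ ∀ u ∈ S, ∀ w ∈ S, (D u w ↔ (u ∈ A ∧ w ∉ A))}.ncard

open Real

lemma weighted_rpow_mul_rpow_le {x y w₁ w₂ r : ℝ} (hx : 0 ≤ x) (hy : 0 ≤ y) (hw₁ : 0 < w₁)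
    (hw₂ : 0 < w₂) (hw : w₁ + w₂ = 1) (hr : 0 ≤ r) :
    x ^ (w₁ * r) * y ^ (w₂ * r) ≤ w₁ ^ (w₁ * r) * w₂ ^ (w₂ * r) * (x + y) ^ r := by
  have amgm : (x / w₁) ^ w₁ * (y / w₂) ^ w₂ ≤ x + y := by
    calc (x / w₁) ^ w₁ * (y / w₂) ^ w₂ ≤ w₁ * (x / w₁) + w₂ * (y / w₂) :=
          geom_mean_le_arith_mean2_weighted hw₁.le hw₂.le (by positivity) (by positivity) hw
      _ = x + y := by field_simp
  calc x ^ (w₁ * r) * y ^ (w₂ * r)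
      = ((x / w₁) ^ w₁ * (y / w₂) ^ w₂) ^ r * (w₁ ^ (w₁ * r) * w₂ ^ (w₂ * r)) := by
        rw [mul_rpow (by positivity) (by positivity), ← rpow_mul (by positivity),
          ← rpow_mul (by positivity), div_rpow hx hw₁.le, div_rpow hy hw₂.le]
        field_simp
    _ ≤ (x + y) ^ r * (w₁ ^ (w₁ * r) * w₂ ^ (w₂ * r)) := by gcongr
    _ = _ := by ring

lemma rpow_mul_rpow_le_of_add_le_one {x y w₁ w₂ r : ℝ} (hx : 0 ≤ x) (hy : 0 ≤ y)
    (hxy : x + y ≤ 1) (hw₁ : 0 < w₁) (hw₂ : 0 < w₂) (hw : w₁ + w₂ = 1) (hr : 0 ≤ r) :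
    x ^ (w₁ * r) * y ^ (w₂ * r) ≤ w₁ ^ (w₁ * r) * w₂ ^ (w₂ * r) :=
  (weighted_rpow_mul_rpow_le hx hy hw₁ hw₂ hw hr).trans
    (mul_le_of_le_one_right (by positivity) (rpow_le_one (by positivity) hxy hr))

lemma mul_rpow_div_add_rpow_mul_rpow_div_le_one {a b c U V x y z : ℝ} (ha : 1 ≤ a)
    (hU : 0 < U) (hV : 0 < V)
    (hU_le : ∀ X W : ℝ, 0 ≤ X → 0 ≤ W → X + W ≤ 1 → X ^ c * W ≤ U)
    (hV_le : ∀ X W : ℝ, 0 ≤ X → 0 ≤ W → X + W ≤ 1 → X ^ b * W ^ a ≤ V)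
    (hx : 0 ≤ x) (hy : 0 ≤ y) (hz : 0 ≤ z) (hxyz : x + y + z ≤ 1) :
    y * x ^ c / U + z ^ a * x ^ b / V ≤ 1 := by
  set w := y + z
  have hpow : ∀ {r : ℝ}, 0 ≤ r → r ^ a = r * r ^ (a - 1) := fun hr => by
    rw [← rpow_one_add' hr (by linarith), add_sub_cancel]
  -- With `w = y + z`, `z ^ a ≤ z * w ^ (a - 1)` bounds the left side by
  -- `y * P + z * Q ≤ w * max P Q`, and `w * P, w * Q ≤ 1` are the two bounds on the simplex.
  set P := x ^ c / U
  set Q := w ^ (a - 1) * x ^ b / V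
  have hwP : w * P ≤ 1 := by
    rw [mul_div_assoc', div_le_one hU, mul_comm]
    exact hU_le x w hx (by positivity) (by linarith)
  have hwQ : w * Q ≤ 1 := by
    rw [mul_div_assoc', div_le_one hV, ← mul_assoc, ← hpow (by positivity), mul_comm]
    exact hV_le x w hx (by positivity) (by linarith)
  have hza : z ^ a ≤ z * w ^ (a - 1) := by
    rw [hpow hz]
    gcongr
    linarith
  calc y * x ^ c / U + z ^ a * x ^ b / V ≤ y * P + z * w ^ (a - 1) * (x ^ b / V) := by
        rw [mul_div_assoc, mul_div_assoc]
        gcongr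
    _ = y * P + z * Q := by ring
    _ ≤ y * max P Q + z * max P Q := by gcongr <;> simp
    _ = max (w * P) (w * Q) := by rw [← mul_max_of_nonneg _ _ (by positivity)]; ring
    _ ≤ 1 := max_le hwP hwQ

lemma rpow_sum_mul_rpow_sum_le {ι : Type*} [Fintype ι] {a b c U V m w₁ w₂ : ℝ}
    {x y z : ι → ℝ} (ha : 1 ≤ a) (hU : 0 < U) (hV : 0 < V)
    (hU_le : ∀ X W : ℝ, 0 ≤ X → 0 ≤ W → X + W ≤ 1 → X ^ c * W ≤ U)
    (hV_le : ∀ X W : ℝ, 0 ≤ X → 0 ≤ W → X + W ≤ 1 → X ^ b * W ^ a ≤ V)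
    (hw₁ : 0 < w₁) (hw₂ : 0 < w₂) (hw : w₁ + w₂ = 1) (hm : 0 < m)
    (hx : ∀ i, 0 ≤ x i) (hy : ∀ i, 0 ≤ y i) (hz : ∀ i, 0 ≤ z i)
    (hxyz : ∀ i, x i + y i + z i ≤ m) :
    (∑ i, y i * x i ^ c) ^ w₁ * (∑ i, z i ^ a * x i ^ b) ^ w₂ ≤
      w₁ ^ w₁ * w₂ ^ w₂ * U ^ w₁ * V ^ w₂ * Fintype.card ι *
        m ^ (w₁ * (1 + c) + w₂ * (a + b)) := by
  set A := (∑ i, y i * x i ^ c) / (U * m ^ (1 + c))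
  set B := (∑ i, z i ^ a * x i ^ b) / (V * m ^ (a + b))
  have hA : 0 ≤ A := div_nonneg
    (Finset.sum_nonneg fun i _ => by have := hx i; have := hy i; positivity) (by positivity)
  have hB : 0 ≤ B := div_nonneg
    (Finset.sum_nonneg fun i _ => by have := hx i; have := hz i; positivity) (by positivity)
  have hAB : A + B ≤ Fintype.card ι := by
    have hi : ∀ i, y i * x i ^ c / (U * m ^ (1 + c)) + z i ^ a * x i ^ b / (V * m ^ (a + b)) ≤ 1 :=
      fun i => calc
        _ = y i / m * (x i / m) ^ c / U + (z i / m) ^ a * (x i / m) ^ b / V := by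
          rw [div_rpow (hx i) hm.le, div_rpow (hz i) hm.le, div_rpow (hx i) hm.le, rpow_add hm,
            rpow_add hm, rpow_one]
          field_simp
        _ ≤ 1 := mul_rpow_div_add_rpow_mul_rpow_div_le_one ha hU hV hU_le hV_le
          (div_nonneg (hx i) hm.le) (div_nonneg (hy i) hm.le) (div_nonneg (hz i) hm.le)
          (by rw [← add_div, ← add_div, div_le_one hm]; exact hxyz i)
    calc A + B
        = ∑ i, (y i * x i ^ c / (U * m ^ (1 + c)) + z i ^ a * x i ^ b / (V * m ^ (a + b))) := by
          rw [Finset.sum_add_distrib, ← Finset.sum_div, ← Finset.sum_div]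
      _ ≤ ∑ _i : ι, (1 : ℝ) := Finset.sum_le_sum fun i _ => hi i
      _ = Fintype.card ι := by simp
  calc (∑ i, y i * x i ^ c) ^ w₁ * (∑ i, z i ^ a * x i ^ b) ^ w₂
      = A ^ (w₁ * 1) * B ^ (w₂ * 1) * (U ^ w₁ * V ^ w₂ * m ^ (w₁ * (1 + c) + w₂ * (a + b))) := by
        rw [mul_one, mul_one,
          ← div_mul_cancel₀ (∑ i, y i * x i ^ c) (by positivity : U * m ^ (1 + c) ≠ 0),
          ← div_mul_cancel₀ (∑ i, z i ^ a * x i ^ b) (by positivity : V * m ^ (a + b) ≠ 0),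
          mul_rpow hA (by positivity), mul_rpow hB (by positivity), mul_rpow hU.le (by positivity),
          mul_rpow hV.le (by positivity), ← rpow_mul hm.le, ← rpow_mul hm.le, rpow_add hm]
        ring_nf
    _ ≤ w₁ ^ (w₁ * 1) * w₂ ^ (w₂ * 1) * (A + B) ^ (1 : ℝ) *
          (U ^ w₁ * V ^ w₂ * m ^ (w₁ * (1 + c) + w₂ * (a + b))) :=
        mul_le_mul_of_nonneg_right (weighted_rpow_mul_rpow_le hA hB hw₁ hw₂ hw zero_le_one)
          (by positivity)
    _ ≤ w₁ ^ (w₁ * 1) * w₂ ^ (w₂ * 1) * Fintype.card ι *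
          (U ^ w₁ * V ^ w₂ * m ^ (w₁ * (1 + c) + w₂ * (a + b))) := by
        rw [rpow_one]
        gcongr
    _ = _ := by ring_nf

lemma sq_div_add_mul_le_sub_one {s t : ℝ} (hs : 2 ≤ s) (hst : s ≤ t) :
    s ^ 2 / ((s + t) * t) ≤ s - 1 := by
  have ht : 0 < t := by linarith
  have : s ^ 2 / ((s + t) * t) ≤ 1 := by rw [div_le_one (by positivity)]; nlinarith
  linarith

lemma kst_rpow_sum_mul_rpow_sum_le {ι : Type*} [Fintype ι] {s t m : ℝ} (hs : 2 ≤ s)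
    (hst : s ≤ t) (hm : 0 < m) {x y z : ι → ℝ} (hx : ∀ i, 0 ≤ x i) (hy : ∀ i, 0 ≤ y i)
    (hz : ∀ i, 0 ≤ z i) (hxyz : ∀ i, x i + y i + z i ≤ m) :
    (∑ i, y i * x i ^ (s / t)) ^ (s / (s + t)) *
        (∑ i, z i ^ (1 + (s - 1 - s ^ 2 / ((s + t) * t)) * ((s + t) / t)) *
          x i ^ ((t - 1) * ((s + t) / t))) ^ (t / (s + t)) ≤
      (s / (s + t)) ^ s * (t / (s + t)) ^ t * Fintype.card ι * m ^ (s + t - 1) := by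
  have ht : 0 < t := by linarith
  set w₁ := s / (s + t) with hw₁_def
  set w₂ := t / (s + t) with hw₂_def
  set c := s / t with hc_def
  set a := 1 + (s - 1 - s ^ 2 / ((s + t) * t)) * ((s + t) / t) with ha_def
  set b := (t - 1) * ((s + t) / t) with hb_def
  have hw₁ : 0 < w₁ := by positivity
  have hw₂ : 0 < w₂ := by positivity
  have hw : w₁ + w₂ = 1 := by rw [hw₁_def, hw₂_def]; field_simp
  have ha : 1 ≤ a := le_add_of_nonneg_right
    (mul_nonneg (sub_nonneg.2 (sq_div_add_mul_le_sub_one hs hst)) (by positivity))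
  have hab : 0 ≤ a + b := by
    have : 0 ≤ b := mul_nonneg (by linarith) (by positivity)
    linarith
  -- The exponents are chosen so that both maxima on the simplex sit at the weights `(w₁, w₂)`;
  -- then the constants collapse to `w₁ ^ s * w₂ ^ t`.
  have hU_le : ∀ X W : ℝ, 0 ≤ X → 0 ≤ W → X + W ≤ 1 → X ^ c * W ≤ w₁ ^ c * w₂ := by
    intro X W hX hW hXW
    have key := rpow_mul_rpow_le_of_add_le_one hX hW hXW hw₁ hw₂ hw (r := (s + t) / t)
      (by positivity)
    rwa [show w₁ * ((s + t) / t) = c by rw [hw₁_def, hc_def]; field_simp,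
      show w₂ * ((s + t) / t) = 1 by rw [hw₂_def]; field_simp, rpow_one, rpow_one] at key
  have hV_le : ∀ X W : ℝ, 0 ≤ X → 0 ≤ W → X + W ≤ 1 → X ^ b * W ^ a ≤ w₂ ^ b * w₁ ^ a := by
    intro X W hX hW hXW
    have key := rpow_mul_rpow_le_of_add_le_one hX hW hXW hw₂ hw₁ (by linarith) hab
    rwa [show w₂ * (a + b) = b by rw [hw₂_def, ha_def, hb_def]; field_simp; ring,
      show w₁ * (a + b) = a by rw [hw₁_def, ha_def, hb_def]; field_simp; ring] at key
  have hconst : w₁ ^ w₁ * w₂ ^ w₂ * (w₁ ^ c * w₂) ^ w₁ * (w₂ ^ b * w₁ ^ a) ^ w₂ =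
      w₁ ^ s * w₂ ^ t := by
    rw [show s = w₁ + c * w₁ + a * w₂ by rw [hw₁_def, hw₂_def, hc_def, ha_def]; field_simp; ring,
      show t = w₂ + w₁ + b * w₂ by rw [hw₁_def, hw₂_def, hb_def]; field_simp; ring,
      mul_rpow (by positivity) hw₂.le, mul_rpow (by positivity) (by positivity),
      ← rpow_mul hw₁.le, ← rpow_mul hw₂.le, ← rpow_mul hw₁.le, rpow_add hw₁, rpow_add hw₁,
      rpow_add hw₂, rpow_add hw₂]
    ring
  calc _ ≤ w₁ ^ w₁ * w₂ ^ w₂ * (w₁ ^ c * w₂) ^ w₁ * (w₂ ^ b * w₁ ^ a) ^ w₂ * Fintype.card ι *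
        m ^ (w₁ * (1 + c) + w₂ * (a + b)) :=
      rpow_sum_mul_rpow_sum_le ha (by positivity) (by positivity) hU_le hV_le hw₁ hw₂ hw hm
        hx hy hz hxyz
    _ = _ := by
      rw [hconst, show w₁ * (1 + c) + w₂ * (a + b) = s + t - 1 by
        rw [hw₁_def, hw₂_def, hc_def, ha_def, hb_def]; field_simp; ring]

open Finset

namespace KstInducibility

open scoped Classical

variable {V : Type} (D : V → V → Prop)

structure IsKstPair (s t : ℕ) (A B : Finset V) : Prop where
  card_left : #A = s
  card_right : #B = t
  indep_left : ∀ u ∈ A, ∀ v ∈ A, ¬ D u v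
  indep_right : ∀ u ∈ B, ∀ v ∈ B, ¬ D u v
  oneWay : ∀ u ∈ A, ∀ w ∈ B, D u w ∧ ¬ D w u

variable {D} in
lemma isKstPair_sdiff {s t : ℕ} {S A : Finset V} (hS : #S = s + t) (hAS : A ⊆ S) (hA : #A = s)
    (hD : ∀ u ∈ S, ∀ w ∈ S, (D u w ↔ (u ∈ A ∧ w ∉ A))) : IsKstPair D s t A (S \ A) where
  card_left := hA
  card_right := by rw [card_sdiff_of_subset hAS, hS, hA, Nat.add_sub_cancel_left]
  indep_left u hu v hv huv := ((hD u (hAS hu) v (hAS hv)).1 huv).2 hv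
  indep_right u hu v hv huv :=
    (mem_sdiff.1 hu).2 ((hD u (mem_sdiff.1 hu).1 v (mem_sdiff.1 hv).1).1 huv).1
  oneWay u hu w hw := ⟨(hD u (hAS hu) w (mem_sdiff.1 hw).1).2 ⟨hu, (mem_sdiff.1 hw).2⟩,
    fun hwu => (mem_sdiff.1 hw).2 ((hD w (mem_sdiff.1 hw).1 u (hAS hu)).1 hwu).1⟩

variable [Fintype V]

noncomputable def nonNbrs (v : V) : Finset V := {z | z ≠ v ∧ ¬ D v z ∧ ¬ D z v}

noncomputable def outNbrs (v : V) : Finset V := {z | D v z ∧ ¬ D z v}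

noncomputable def inNbrs (v : V) : Finset V := {z | D z v ∧ ¬ D v z}

noncomputable def oneWayArcs : Finset (V × V) := {e | D e.1 e.2 ∧ ¬ D e.2 e.1}

noncomputable def kstPairs (s t : ℕ) : Finset (Finset V × Finset V) :=
  {p | IsKstPair D s t p.1 p.2}

variable {D} in
@[simp]
lemma mem_kstPairs {s t : ℕ} {p : Finset V × Finset V} :
    p ∈ kstPairs D s t ↔ IsKstPair D s t p.1 p.2 := by
  simp [kstPairs]

lemma kstCount_le_card_kstPairs (s t : ℕ) : kstCount s t D ≤ #(kstPairs D s t) := by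
  calc kstCount s t D ≤ #((kstPairs D s t).image fun p => p.1 ∪ p.2) := by
        rw [kstCount, ← Set.ncard_coe_finset]
        refine Set.ncard_le_ncard ?_ (Finset.finite_toSet _)
        rintro S ⟨hS, A, hAS, hA, hD⟩
        refine mem_image.2 ⟨(A, S \ A), ?_, union_sdiff_of_subset hAS⟩
        simpa using isKstPair_sdiff hS hAS hA hD
    _ ≤ #(kstPairs D s t) := card_image_le

lemma mul_card_kstPairs_eq_sum (s t : ℕ) :
    s * t * #(kstPairs D s t) =
      ∑ e ∈ oneWayArcs D, #{p ∈ kstPairs D s t | e.1 ∈ p.1 ∧ e.2 ∈ p.2} := by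
  have hpair : ∀ p ∈ kstPairs D s t,
      (oneWayArcs D).bipartiteAbove (fun p e => e.1 ∈ p.1 ∧ e.2 ∈ p.2) p = p.1 ×ˢ p.2 := by
    intro p hp
    have hp := mem_kstPairs.1 hp
    ext e
    simp only [bipartiteAbove, oneWayArcs, mem_filter, mem_univ, true_and, mem_product]
    exact ⟨And.right, fun he => ⟨hp.oneWay _ he.1 _ he.2, he⟩⟩
  calc s * t * #(kstPairs D s t) = ∑ p ∈ kstPairs D s t, #(p.1 ×ˢ p.2) := by
        rw [sum_congr rfl fun p hp => ?_, sum_const, smul_eq_mul, mul_comm]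
        have hp := mem_kstPairs.1 hp
        rw [card_product, hp.card_left, hp.card_right]
    _ = ∑ p ∈ kstPairs D s t,
          #((oneWayArcs D).bipartiteAbove (fun p e => e.1 ∈ p.1 ∧ e.2 ∈ p.2) p) :=
        (sum_congr rfl fun p hp => by rw [hpair p hp]).symm
    _ = _ := sum_card_bipartiteAbove_eq_sum_card_bipartiteBelow _

lemma card_kstPairs_filter_le (s t : ℕ) (u w : V) :
    #{p ∈ kstPairs D s t | u ∈ p.1 ∧ w ∈ p.2} ≤
      (#(nonNbrs D u ∩ inNbrs D w)).choose (s - 1) *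
        (#(outNbrs D u ∩ nonNbrs D w)).choose (t - 1) := by
  rw [← card_powersetCard, ← card_powersetCard, ← card_product]
  refine card_le_card_of_injOn (fun p => (p.1.erase u, p.2.erase w)) ?_ ?_
  · intro p hp
    simp only [coe_filter, mem_kstPairs, Set.mem_ofPred_eq] at hp
    obtain ⟨hp, hu, hw⟩ := hp
    simp only [mem_coe, mem_product, mem_powersetCard, card_erase_of_mem hu,
      card_erase_of_mem hw, hp.card_left, hp.card_right, and_true]
    constructor
    · intro z hz
      obtain ⟨hzu, hz⟩ := mem_erase.1 hz
      simp only [mem_inter, nonNbrs, inNbrs, mem_filter, mem_univ, true_and]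
      exact ⟨⟨hzu, hp.indep_left u hu z hz, hp.indep_left z hz u hu⟩, hp.oneWay z hz w hw⟩
    · intro z hz
      obtain ⟨hzw, hz⟩ := mem_erase.1 hz
      simp only [mem_inter, nonNbrs, outNbrs, mem_filter, mem_univ, true_and]
      exact ⟨hp.oneWay u hu z hz, ⟨hzw, hp.indep_right w hw z hz, hp.indep_right z hz w hw⟩⟩
  · intro p hp q hq hpq
    simp only [coe_filter, Set.mem_ofPred_eq] at hp hq
    simp only [Prod.mk.injEq] at hpq
    rw [Prod.ext_iff, ← insert_erase hp.2.1, ← insert_erase hp.2.2, hpq.1, hpq.2,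
      insert_erase hq.2.1, insert_erase hq.2.2]
    exact ⟨rfl, rfl⟩

open Nat in
lemma factorial_mul_factorial_mul_kstCount_le {s t : ℕ} (hs : s ≠ 0) (ht : t ≠ 0) :
    s ! * t ! * kstCount s t D ≤
      ∑ e ∈ oneWayArcs D, #(nonNbrs D e.1 ∩ inNbrs D e.2) ^ (s - 1) *
        #(outNbrs D e.1 ∩ nonNbrs D e.2) ^ (t - 1) := by
  calc s ! * t ! * kstCount s t D ≤ (s - 1)! * (t - 1)! * (s * t * #(kstPairs D s t)) := by
        rw [← mul_factorial_pred hs, ← mul_factorial_pred ht,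
          show s * (s - 1)! * (t * (t - 1)!) * kstCount s t D =
            (s - 1)! * (t - 1)! * (s * t * kstCount s t D) by ring]
        gcongr
        exact kstCount_le_card_kstPairs D s t
    _ = ∑ e ∈ oneWayArcs D,
          (s - 1)! * (t - 1)! * #{p ∈ kstPairs D s t | e.1 ∈ p.1 ∧ e.2 ∈ p.2} := by
        rw [mul_card_kstPairs_eq_sum, mul_sum]
    _ ≤ ∑ e ∈ oneWayArcs D, (s - 1)! * (#(nonNbrs D e.1 ∩ inNbrs D e.2)).choose (s - 1) *
          ((t - 1)! * (#(outNbrs D e.1 ∩ nonNbrs D e.2)).choose (t - 1)) := by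
        refine sum_le_sum fun e _ => ?_
        rw [mul_mul_mul_comm]
        exact Nat.mul_le_mul_left _ (card_kstPairs_filter_le D s t e.1 e.2)
    _ ≤ _ := by
        gcongr with e <;>
          exact (descFactorial_eq_factorial_mul_choose _ _).symm.trans_le
            (descFactorial_le_pow _ _)

lemma card_nonNbrs_add_card_outNbrs_add_card_inNbrs_le (v : V) :
    #(nonNbrs D v) + #(outNbrs D v) + #(inNbrs D v) ≤ Fintype.card V := by
  unfold nonNbrs outNbrs inNbrs
  rw [← card_union_of_disjoint, ← card_union_of_disjoint]
  · exact card_le_univ _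
  · simp only [disjoint_union_left, disjoint_filter]
    exact ⟨fun z _ h₁ h₂ => h₁.2.2 h₂.1, fun z _ h₁ h₂ => h₁.2 h₂.1⟩
  · simp only [disjoint_filter]
    exact fun z _ h₁ h₂ => h₁.2.1 h₂.1

lemma sum_oneWayArcs_fst {M : Type*} [AddCommMonoid M] (f : V → M) :
    ∑ e ∈ oneWayArcs D, f e.1 = ∑ u, #(outNbrs D u) • f u := by
  rw [sum_finset_product (oneWayArcs D) univ (outNbrs D) (by simp [oneWayArcs, outNbrs])]
  simp

lemma sum_oneWayArcs_snd {M : Type*} [AddCommMonoid M] (f : V → M) :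
    ∑ e ∈ oneWayArcs D, f e.2 = ∑ w, #(inNbrs D w) • f w := by
  rw [sum_finset_product_right (oneWayArcs D) univ (inNbrs D) (by simp [oneWayArcs, inNbrs])]
  simp

lemma sum_oneWayArcs_mul_le {p q : ℝ} (hpq : p.HolderConjugate q) {f g : V → ℝ}
    (hf : ∀ v, 0 ≤ f v) (hg : ∀ v, 0 ≤ g v) :
    ∑ e ∈ oneWayArcs D, f e.1 * g e.2 ≤
      (∑ u, #(outNbrs D u) * f u ^ p) ^ (1 / p) * (∑ w, #(inNbrs D w) * g w ^ q) ^ (1 / q) := by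
  have holder := inner_le_Lp_mul_Lq_of_nonneg (oneWayArcs D) hpq (f := fun e => f e.1)
    (g := fun e => g e.2) (fun e _ => hf _) (fun e _ => hg _)
  rw [sum_oneWayArcs_fst D (fun u => f u ^ p), sum_oneWayArcs_snd D (fun w => g w ^ q)] at holder
  simpa only [nsmul_eq_mul] using holder

lemma sum_oneWayArcs_rpow_le [Nonempty V] {s t : ℝ} (hs : 2 ≤ s) (hst : s ≤ t) :
    ∑ e ∈ oneWayArcs D, (#(nonNbrs D e.1) : ℝ) ^ (s ^ 2 / ((s + t) * t)) *
        ((#(inNbrs D e.2) : ℝ) ^ (s - 1 - s ^ 2 / ((s + t) * t)) *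
          (#(nonNbrs D e.2) : ℝ) ^ (t - 1)) ≤
      (s / (s + t)) ^ s * (t / (s + t)) ^ t * (Fintype.card V : ℝ) ^ (s + t) := by
  have ht : 0 < t := by linarith
  have he₂ : 0 ≤ s - 1 - s ^ 2 / ((s + t) * t) := sub_nonneg.2 (sq_div_add_mul_le_sub_one hs hst)
  set x : V → ℝ := fun v => #(nonNbrs D v)
  set y : V → ℝ := fun v => #(outNbrs D v)
  set z : V → ℝ := fun v => #(inNbrs D v)
  have hn : (0 : ℝ) < Fintype.card V := by exact_mod_cast Fintype.card_pos
  have hpq := holderConjugate_one_div (a := s / (s + t)) (b := t / (s + t)) (by positivity)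
    (by positivity) (by field_simp)
  have hF : ∀ u, y u * (x u ^ (s ^ 2 / ((s + t) * t))) ^ ((s + t) / s) = y u * x u ^ (s / t) :=
    fun u => by
      rw [← rpow_mul (Nat.cast_nonneg _)]
      congr 2
      field_simp
  have hG : ∀ w, z w * (z w ^ (s - 1 - s ^ 2 / ((s + t) * t)) * x w ^ (t - 1)) ^ ((s + t) / t) =
      z w ^ (1 + (s - 1 - s ^ 2 / ((s + t) * t)) * ((s + t) / t)) *
        x w ^ ((t - 1) * ((s + t) / t)) := fun w => by
    rw [mul_rpow (by positivity) (by positivity), ← rpow_mul (Nat.cast_nonneg _),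
      ← rpow_mul (Nat.cast_nonneg _), ← mul_assoc,
      ← rpow_one_add' (Nat.cast_nonneg _) (by positivity)]
  calc _ ≤ (∑ u, y u * (x u ^ (s ^ 2 / ((s + t) * t))) ^ ((s + t) / s)) ^ (s / (s + t)) *
        (∑ w, z w * (z w ^ (s - 1 - s ^ 2 / ((s + t) * t)) * x w ^ (t - 1)) ^ ((s + t) / t)) ^
          (t / (s + t)) := by
        simpa only [one_div_div, one_div_one_div] using
          sum_oneWayArcs_mul_le D hpq (f := fun u => x u ^ (s ^ 2 / ((s + t) * t)))
            (g := fun w => z w ^ (s - 1 - s ^ 2 / ((s + t) * t)) * x w ^ (t - 1))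
            (fun _ => by positivity) (fun _ => by positivity)
    _ ≤ (s / (s + t)) ^ s * (t / (s + t)) ^ t * Fintype.card V *
          (Fintype.card V : ℝ) ^ (s + t - 1) := by
      simp only [hF, hG]
      exact kst_rpow_sum_mul_rpow_sum_le hs hst hn (fun _ => Nat.cast_nonneg _)
        (fun _ => Nat.cast_nonneg _) (fun _ => Nat.cast_nonneg _) fun v => by
          simp only [x, y, z]
          exact_mod_cast card_nonNbrs_add_card_outNbrs_add_card_inNbrs_le D v
    _ = _ := by rw [mul_assoc, ← rpow_one_add' hn.le (by linarith), add_sub_cancel]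

open Nat in
theorem kstCount_mul_factorial_le [Nonempty V] {s t : ℕ} (hs : 2 ≤ s) (hst : s ≤ t) :
    (kstCount s t D : ℝ) * (s ! * t !) ≤
      ((s : ℝ) / (s + t)) ^ s * ((t : ℝ) / (s + t)) ^ t * (Fintype.card V : ℝ) ^ (s + t) := by
  have hsR : (2 : ℝ) ≤ s := by exact_mod_cast hs
  have hstR : (s : ℝ) ≤ t := by exact_mod_cast hst
  have he₂ := sq_div_add_mul_le_sub_one hsR hstR
  calc (kstCount s t D : ℝ) * (s ! * t !)
      ≤ ∑ e ∈ oneWayArcs D, (#(nonNbrs D e.1 ∩ inNbrs D e.2) : ℝ) ^ (s - 1) *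
          (#(outNbrs D e.1 ∩ nonNbrs D e.2) : ℝ) ^ (t - 1) := by
        rw [mul_comm]
        exact_mod_cast factorial_mul_factorial_mul_kstCount_le D (by omega) (by omega)
    _ ≤ ∑ e ∈ oneWayArcs D, (#(nonNbrs D e.1) : ℝ) ^ ((s : ℝ) ^ 2 / ((s + t) * t)) *
          ((#(inNbrs D e.2) : ℝ) ^ ((s : ℝ) - 1 - s ^ 2 / ((s + t) * t)) *
            (#(nonNbrs D e.2) : ℝ) ^ ((t : ℝ) - 1)) := by
        refine sum_le_sum fun e _ => ?_
        have hX₁ : #(nonNbrs D e.1 ∩ inNbrs D e.2) ≤ #(nonNbrs D e.1) :=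
          card_le_card inter_subset_left
        have hX₂ : #(nonNbrs D e.1 ∩ inNbrs D e.2) ≤ #(inNbrs D e.2) :=
          card_le_card inter_subset_right
        have hY : #(outNbrs D e.1 ∩ nonNbrs D e.2) ≤ #(nonNbrs D e.2) :=
          card_le_card inter_subset_right
        rw [← rpow_natCast, ← rpow_natCast, Nat.cast_sub (by omega), Nat.cast_sub (by omega),
          Nat.cast_one, ← mul_assoc]
        gcongr
        · calc (#(nonNbrs D e.1 ∩ inNbrs D e.2) : ℝ) ^ ((s : ℝ) - 1)
              = (#(nonNbrs D e.1 ∩ inNbrs D e.2) : ℝ) ^ ((s : ℝ) ^ 2 / ((s + t) * t)) *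
                  (#(nonNbrs D e.1 ∩ inNbrs D e.2) : ℝ) ^
                    ((s : ℝ) - 1 - s ^ 2 / ((s + t) * t)) := by
                rw [← rpow_add' (Nat.cast_nonneg _) (by linarith), add_sub_cancel]
            _ ≤ _ := by gcongr
        · linarith
    _ ≤ ((s : ℝ) / (s + t)) ^ (s : ℝ) * ((t : ℝ) / (s + t)) ^ (t : ℝ) *
          (Fintype.card V : ℝ) ^ ((s : ℝ) + t) := sum_oneWayArcs_rpow_le D hsR hstR
    _ = _ := by rw [← Nat.cast_add, rpow_natCast, rpow_natCast, rpow_natCast]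

end KstInducibility

open Filter Nat in
lemma eventually_pow_div_factorial_le_choose_mul (k : ℕ) {δ : ℝ} (hδ : 0 < δ) :
    ∀ᶠ n : ℕ in atTop, (n : ℝ) ^ k / k ! ≤ n.choose k * (1 + δ) := by
  filter_upwards [(isEquivalent_choose k).symm.isLittleO.def hδ] with n hn
  simp only [Pi.sub_apply, Real.norm_eq_abs, Nat.abs_cast] at hn
  linarith [(le_abs_self _).trans hn]

open Filter Nat in
theorem kst_inducibility_upper (s t : ℕ) (hs : 2 ≤ s) (hst : s ≤ t)
    (ε : ℝ) (hε : 0 < ε) :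
    ∃ N : ℕ, ∀ n : ℕ, N ≤ n → ∀ D : Fin n → Fin n → Prop,
      (kstCount s t D : ℝ) ≤
        (((s + t).choose s : ℝ) * ((s : ℝ) / (s + t)) ^ s * ((t : ℝ) / (s + t)) ^ t + ε) *
          (n.choose (s + t) : ℝ) := by
  set τ : ℝ := ((s + t).choose s : ℝ) * ((s : ℝ) / (s + t)) ^ s * ((t : ℝ) / (s + t)) ^ t
  have hτ : 0 < τ := by
    have : (0 : ℝ) < (s + t).choose s := by exact_mod_cast Nat.choose_pos (by omega)
    have : (0 : ℝ) < s := by exact_mod_cast (by omega : 0 < s)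
    have : (0 : ℝ) < t := by exact_mod_cast (by omega : 0 < t)
    positivity
  obtain ⟨N, hN⟩ := eventually_atTop.1
    ((eventually_pow_div_factorial_le_choose_mul (s + t) (div_pos hε hτ)).and
      (eventually_ge_atTop 1))
  refine ⟨N, fun n hn D => ?_⟩
  obtain ⟨hchoose, hn₁⟩ := hN n hn
  have : Nonempty (Fin n) := ⟨⟨0, hn₁⟩⟩
  have hexact := KstInducibility.kstCount_mul_factorial_le D hs hst
  rw [Fintype.card_fin] at hexact
  calc (kstCount s t D : ℝ)
      ≤ ((s : ℝ) / (s + t)) ^ s * ((t : ℝ) / (s + t)) ^ t * n ^ (s + t) / (s ! * t !) := by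
        rwa [le_div_iff₀ (by positivity)]
    _ = τ * ((n : ℝ) ^ (s + t) / (s + t)!) := by
        simp only [τ, cast_add_choose]
        field_simp
    _ ≤ τ * (n.choose (s + t) * (1 + ε / τ)) := by gcongr
    _ = (τ + ε) * n.choose (s + t) := by field_simp
end

section
/- For all integers 2 ≤ s ≤ t and every ε > 0, there exists N such that for every n ≥ N there exists a digraph D on n vertices in which the number of (s+t)-element vertex subsets inducing a copy of the complete bipartite digraph K⃗_{s,t} is at least ( C(s+t,s)·(s/(s+t))^s·(t/(s+t))^t − ε )·C(n, s+t). -/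
open Finset Filter Topology
open scoped Nat

theorem choose_card_mul_choose_card_compl_le_kstCount {V : Type} [Fintype V] [DecidableEq V]
    (X : Finset V) (s t : ℕ) :
    (#X).choose s * (#Xᶜ).choose t ≤ kstCount s t (fun u w => u ∈ X ∧ w ∉ X) := by
  set pairs := X.powersetCard s ×ˢ Xᶜ.powersetCard t
  have hpairs : ∀ p ∈ pairs, p.1 = (p.1 ∪ p.2) ∩ X ∧ p.2 = (p.1 ∪ p.2) \ X := by
    rintro ⟨A, B⟩ hp
    simp only [pairs, mem_product, mem_powersetCard] at hp
    obtain ⟨⟨hAX, -⟩, hBX, -⟩ := hp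
    constructor <;> ext v <;> grind [mem_compl]
  rw [← card_powersetCard, ← card_powersetCard, ← card_product, ← Set.ncard_coe_finset]
  refine Set.ncard_le_ncard_of_injOn (fun p => p.1 ∪ p.2) ?_ ?_ (Set.toFinite _)
  · rintro ⟨A, B⟩ hp
    have hA : A = (A ∪ B) ∩ X := (hpairs _ hp).1
    simp only [mem_coe, mem_product, mem_powersetCard] at hp
    refine ⟨?_, A, subset_union_left, hp.1.2, fun u hu w hw => ?_⟩
    · rw [card_union_of_disjoint, hp.1.2, hp.2.2]
      exact disjoint_compl_right.mono hp.1.1 hp.2.1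
    · dsimp only at hu hw ⊢
      rw [hA]
      simp [hu, hw]
  · rintro p hp q hq (h : p.1 ∪ p.2 = q.1 ∪ q.2)
    obtain ⟨hp1, hp2⟩ := hpairs p hp
    obtain ⟨hq1, hq2⟩ := hpairs q hq
    exact Prod.ext (by rw [hp1, hq1, h]) (by rw [hp2, hq2, h])

lemma pow_div_factorial_le_choose {x : ℝ} {m r : ℕ} (hx0 : 0 ≤ x) (hx : x + r ≤ m + 1) :
    x ^ r / r ! ≤ m.choose r := by
  have hr : r ≤ m + 1 := by exact_mod_cast (le_add_of_nonneg_left hx0).trans hx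
  refine le_trans ?_ (Nat.pow_le_choose r m)
  gcongr
  rw [Nat.cast_sub hr]
  push_cast
  linarith

lemma choose_mul_pow_mul_pow_mul_choose_le {s t m n : ℕ} {x y : ℝ} (hx0 : 0 ≤ x) (hy0 : 0 ≤ y)
    (hx : x * n + s ≤ m + 1) (hy : y * n + t ≤ (n - m : ℕ) + 1) :
    (s + t).choose s * x ^ s * y ^ t * n.choose (s + t) ≤ m.choose s * (n - m).choose t := by
  have hfact : ((s + t).choose s : ℝ) * s ! * t ! = (s + t)! := by
    rw [Nat.choose_symm_add]
    exact_mod_cast Nat.add_choose_mul_factorial_mul_factorial s t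
  have hchoose : ((s + t).choose s : ℝ) ≠ 0 :=
    Nat.cast_ne_zero.2 (Nat.choose_pos (Nat.le_add_right s t)).ne'
  calc (s + t).choose s * x ^ s * y ^ t * n.choose (s + t)
      ≤ (s + t).choose s * x ^ s * y ^ t * (n ^ (s + t) / (s + t)!) := by
        gcongr
        exact Nat.choose_le_pow_div _ _
    _ = (x * n) ^ s / s ! * ((y * n) ^ t / t !) := by
        rw [← hfact]
        field_simp
        ring
    _ ≤ m.choose s * (n - m).choose t := by
        gcongr
        · exact pow_div_factorial_le_choose (by positivity) hx
        · exact pow_div_factorial_le_choose (by positivity) hy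

lemma mul_div_add_le_self (s t n : ℕ) : s * n / (s + t) ≤ n :=
  Nat.div_le_of_le_mul (Nat.mul_le_mul_right n (Nat.le_add_right s t))

lemma eventually_le_choose_mul_choose (s t : ℕ) {ε : ℝ} (hε : 0 < ε) :
    ∀ᶠ n : ℕ in atTop,
      (((s + t).choose s : ℝ) * ((s : ℝ) / (s + t)) ^ s * ((t : ℝ) / (s + t)) ^ t - ε) *
        (n.choose (s + t) : ℝ) ≤ (s * n / (s + t)).choose s * (n - s * n / (s + t)).choose t := by
  obtain ⟨rfl, rfl⟩ | hk : s = 0 ∧ t = 0 ∨ 0 < s + t := by omega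
  · simp [hε.le]
  set C : ℝ := ((s + t).choose s : ℝ)
  set σ : ℝ := s / (s + t)
  set τ : ℝ := t / (s + t)
  have hkR : (0 : ℝ) < s + t := by exact_mod_cast hk
  have hστ : σ + τ = 1 := by rw [← add_div, div_self hkR.ne']
  have hlim : Tendsto (fun n : ℕ => C * (σ - s / n) ^ s * (τ - t / n) ^ t) atTop
      (𝓝 (C * σ ^ s * τ ^ t)) := by
    have hσ := tendsto_const_nhds (x := σ).sub (tendsto_const_div_atTop_nhds_zero_nat (s : ℝ))
    have hτ := tendsto_const_nhds (x := τ).sub (tendsto_const_div_atTop_nhds_zero_nat (t : ℝ))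
    rw [sub_zero] at hσ hτ
    exact ((hσ.pow s).const_mul C).mul (hτ.pow t)
  filter_upwards [hlim.eventually_const_le (sub_lt_self _ hε), eventually_ge_atTop (s + t)]
    with n hCn hkn
  set m := s * n / (s + t)
  have hn : (0 : ℝ) < n := by exact_mod_cast hk.trans_le hkn
  have hσn_eq : σ * n = ((s * n : ℕ) : ℝ) / ((s + t : ℕ) : ℝ) := by push_cast; ring
  have hm_le : (m : ℝ) ≤ σ * n := hσn_eq ▸ Nat.cast_div_le
  have hm_lt : σ * n < m + 1 := by
    have h := Nat.lt_floor_add_one (((s * n : ℕ) : ℝ) / ((s + t : ℕ) : ℝ))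
    rwa [Nat.floor_div_eq_div, ← hσn_eq] at h
  have hσn : s / n ≤ σ := div_le_div_of_nonneg_left (by positivity) hkR (by exact_mod_cast hkn)
  have hτn : t / n ≤ τ := div_le_div_of_nonneg_left (by positivity) hkR (by exact_mod_cast hkn)
  calc (C * σ ^ s * τ ^ t - ε) * n.choose (s + t)
      ≤ C * (σ - s / n) ^ s * (τ - t / n) ^ t * n.choose (s + t) := by gcongr
    _ ≤ m.choose s * (n - m).choose t := by
      refine choose_mul_pow_mul_pow_mul_choose_le (sub_nonneg.2 hσn) (sub_nonneg.2 hτn) ?_ ?_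
      · rw [sub_mul, div_mul_cancel₀ _ hn.ne']
        linarith
      · rw [sub_mul, div_mul_cancel₀ _ hn.ne', Nat.cast_sub (mul_div_add_le_self s t n)]
        linear_combination hm_le + n * hστ

theorem kst_inducibility_lower_general (s t : ℕ)
    (ε : ℝ) (hε : 0 < ε) :
    ∃ N : ℕ, ∀ n : ℕ, N ≤ n → ∃ D : Fin n → Fin n → Prop,
      (((s + t).choose s : ℝ) * ((s : ℝ) / (s + t)) ^ s * ((t : ℝ) / (s + t)) ^ t - ε) *
          (n.choose (s + t) : ℝ) ≤ (kstCount s t D : ℝ) := by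
  obtain ⟨N, hN⟩ := eventually_atTop.1 (eventually_le_choose_mul_choose s t hε)
  refine ⟨N, fun n hn => ?_⟩
  obtain ⟨X, -, hX⟩ := exists_subset_card_eq (s := (univ : Finset (Fin n)))
    (by simpa using mul_div_add_le_self s t n)
  refine ⟨fun u w => u ∈ X ∧ w ∉ X, (hN n hn).trans ?_⟩
  have h := choose_card_mul_choose_card_compl_le_kstCount X s t
  rw [card_compl, hX, Fintype.card_fin] at h
  exact_mod_cast h

theorem kst_inducibility_lower (s t : ℕ) (hs : 2 ≤ s) (hst : s ≤ t)
    (ε : ℝ) (hε : 0 < ε) :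
    ∃ N : ℕ, ∀ n : ℕ, N ≤ n → ∃ D : Fin n → Fin n → Prop,
      (((s + t).choose s : ℝ) * ((s : ℝ) / (s + t)) ^ s * ((t : ℝ) / (s + t)) ^ t - ε) *
          (n.choose (s + t) : ℝ) ≤ (kstCount s t D : ℝ) :=
  kst_inducibility_lower_general s t ε hε
end

section
/- Let m ≥ 1 and let s, t be integers with 2 ≤ s ≤ t. If w_1 ≥ w_2 ≥ … ≥ w_m ≥ 0 are real numbers, then Σ_{1 ≤ i < j ≤ m} w_i^t · w_j^s ≤ w_1^t · ( Σ_{i=2}^{m} w_i )^s. -/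
/-!
Write the left side column by column, as `∑_{j ≥ 2} ∑_{i < j} w_i^t w_j^s`. In column `j`
the term `i = 1` is `w_1^t w_j^{s-1} · w_j`, and for `2 ≤ i < j` the bounds `w_i, w_j ≤ w_1`
give `w_i^t w_j^s ≤ w_1^t w_j^{s-1} · w_i`; so column `j` is at most
`w_1^t w_j^{s-1} (w_2 + ⋯ + w_j) ≤ w_1^t w_j^{s-1} S` with `S = w_2 + ⋯ + w_m`.
Summing over `j` and using `∑ w_j^{s-1} ≤ S^{s-1}` (valid as `s - 1 ≥ 1`) gives `w_1^t S^s`.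
-/

open Finset

namespace Finset

lemma sum_pow_le_pow_sum_of_nonneg {ι R : Type*} [CommSemiring R] [PartialOrder R]
    [IsOrderedRing R] {s : Finset ι} {f : ι → R} (hf : ∀ i ∈ s, 0 ≤ f i) {n : ℕ} (hn : n ≠ 0) :
    ∑ i ∈ s, f i ^ n ≤ (∑ i ∈ s, f i) ^ n := by
  obtain ⟨n, rfl⟩ := Nat.exists_eq_succ_of_ne_zero hn
  rw [pow_succ', sum_mul]
  refine sum_le_sum fun i hi ↦ ?_
  rw [pow_succ']
  exact mul_le_mul_of_nonneg_left (pow_le_pow_left₀ (hf i hi) (single_le_sum hf hi) n) (hf i hi)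

lemma sum_Icc_sum_Icc_ite_lt {M : Type*} [AddCommMonoid M] (a b : ℕ) (f : ℕ → ℕ → M) :
    (∑ i ∈ Icc a b, ∑ j ∈ Icc a b, if i < j then f i j else 0) =
      ∑ j ∈ Icc (a + 1) b, ∑ i ∈ Ico a j, f i j := by
  rw [sum_comm]
  simp_rw [← sum_filter]
  refine (sum_subset (Icc_subset_Icc_left a.le_succ) fun j hj hj' ↦ ?_).symm.trans
    (sum_congr rfl fun j hj ↦ ?_)
  · rw [show j = a by simp only [mem_Icc] at hj hj'; omega]
    exact sum_eq_zero fun i hi ↦ by simp at hi; omega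
  · congr 1
    ext i
    simp only [mem_filter, mem_Icc, mem_Ico] at hj ⊢
    omega

end Finset

lemma pow_succ_mul_pow_succ_le {R : Type*} [CommSemiring R] [PartialOrder R] [IsOrderedRing R]
    {a b c : R} (ha : 0 ≤ a) (hb : 0 ≤ b) (hac : a ≤ c) (hbc : b ≤ c) (s t : ℕ) :
    a ^ (t + 1) * b ^ (s + 1) ≤ c ^ (t + 1) * a * b ^ s := by
  have hc : 0 ≤ c := ha.trans hac
  calc a ^ (t + 1) * b ^ (s + 1) = a ^ t * b * (a * b ^ s) := by ring
    _ ≤ c ^ t * c * (a * b ^ s) := by gcongr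
    _ = c ^ (t + 1) * a * b ^ s := by ring

lemma sum_Ico_pow_mul_pow_le {R : Type*} [CommSemiring R] [PartialOrder R] [IsOrderedRing R]
    {w : ℕ → R} (hw : ∀ i, 0 ≤ w i) {j : ℕ} (hj : 2 ≤ j) (hle : ∀ i ∈ Icc 1 j, w i ≤ w 1)
    (s t : ℕ) :
    ∑ i ∈ Ico 1 j, w i ^ (t + 1) * w j ^ (s + 1) ≤
      w 1 ^ (t + 1) * w j ^ s * ∑ i ∈ Icc 2 j, w i := by
  rw [sum_eq_sum_Ico_succ_bot (by omega), Icc_eq_cons_Ico hj, sum_cons, mul_add, mul_sum]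
  refine add_le_add (le_of_eq (by ring)) (sum_le_sum fun i hi ↦ ?_)
  have hi := mem_Ico.1 hi
  calc w i ^ (t + 1) * w j ^ (s + 1) ≤ w 1 ^ (t + 1) * w i * w j ^ s :=
        pow_succ_mul_pow_succ_le (hw i) (hw j) (hle i (mem_Icc.2 ⟨by omega, hi.2.le⟩))
          (hle j (mem_Icc.2 ⟨by omega, le_rfl⟩)) s t
    _ = w 1 ^ (t + 1) * w j ^ s * w i := by ring

theorem kst_key_inequality_general (m s t : ℕ) (hs : 2 ≤ s) (hst : s ≤ t)
    (w : ℕ → ℝ) (hnonneg : ∀ i, 0 ≤ w i)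
    (hmono : ∀ i j : ℕ, 1 ≤ i → i ≤ j → j ≤ m → w j ≤ w i) :
    (∑ i ∈ Finset.Icc 1 m, ∑ j ∈ Finset.Icc 1 m,
        if i < j then w i ^ t * w j ^ s else 0) ≤
      w 1 ^ t * (∑ i ∈ Finset.Icc 2 m, w i) ^ s := by
  obtain ⟨s, rfl⟩ : ∃ s', s = s' + 1 := ⟨s - 1, by omega⟩
  obtain ⟨t, rfl⟩ : ∃ t', t = t' + 1 := ⟨t - 1, by omega⟩
  set S := ∑ i ∈ Icc 2 m, w i
  have hS : 0 ≤ S := sum_nonneg fun i _ ↦ hnonneg i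
  calc (∑ i ∈ Icc 1 m, ∑ j ∈ Icc 1 m, if i < j then w i ^ (t + 1) * w j ^ (s + 1) else 0)
      = ∑ j ∈ Icc 2 m, ∑ i ∈ Ico 1 j, w i ^ (t + 1) * w j ^ (s + 1) := sum_Icc_sum_Icc_ite_lt ..
    _ ≤ ∑ j ∈ Icc 2 m, w 1 ^ (t + 1) * w j ^ s * ∑ i ∈ Icc 2 j, w i := by
      gcongr with j hj
      rw [mem_Icc] at hj
      exact sum_Ico_pow_mul_pow_le hnonneg hj.1
        (fun i hi ↦ hmono 1 i le_rfl (mem_Icc.1 hi).1 ((mem_Icc.1 hi).2.trans hj.2)) s t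
    _ ≤ ∑ j ∈ Icc 2 m, w 1 ^ (t + 1) * w j ^ s * S := by
      refine sum_le_sum fun j hj ↦ mul_le_mul_of_nonneg_left ?_
        (mul_nonneg (pow_nonneg (hnonneg 1) _) (pow_nonneg (hnonneg j) _))
      exact sum_le_sum_of_subset_of_nonneg (Icc_subset_Icc_right (mem_Icc.1 hj).2)
        fun i _ _ ↦ hnonneg i
    _ = w 1 ^ (t + 1) * S * ∑ j ∈ Icc 2 m, w j ^ s := by
      rw [mul_sum]; exact sum_congr rfl fun j _ ↦ by ring
    _ ≤ w 1 ^ (t + 1) * S * S ^ s := by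
      have := hnonneg 1
      gcongr
      exact sum_pow_le_pow_sum_of_nonneg (fun i _ ↦ hnonneg i) (by omega)
    _ = w 1 ^ (t + 1) * S ^ (s + 1) := by ring

/-- For `w_1 ≥ w_2 ≥ … ≥ w_m ≥ 0` and `2 ≤ s ≤ t`,
`Σ_{1 ≤ i < j ≤ m} w_i^t·w_j^s ≤ w_1^t·(Σ_{i=2}^m w_i)^s`. -/
theorem kst_key_inequality (m s t : ℕ) (hm : 1 ≤ m) (hs : 2 ≤ s) (hst : s ≤ t)
    (w : ℕ → ℝ) (hnonneg : ∀ i, 0 ≤ w i)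
    (hmono : ∀ i j : ℕ, 1 ≤ i → i ≤ j → j ≤ m → w j ≤ w i) :
    (∑ i ∈ Finset.Icc 1 m, ∑ j ∈ Finset.Icc 1 m,
        if i < j then w i ^ t * w j ^ s else 0) ≤
      w 1 ^ t * (∑ i ∈ Finset.Icc 2 m, w i) ^ s :=
  kst_key_inequality_general m s t hs hst w hnonneg hmono
end
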